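/- arXiv:2111.07251 — 9 statements merged into one kernel-verified Lean document; each statement's English description precedes it below -/
import Mathlib

section
/- Let U, V : ℂ×ℝ → ℂ be smooth and solve the DSII equation, let ψ₁, ψ₂ satisfy the Dirac equation with potential U, let φ₁, φ₂ satisfy the conjugate Dirac equation with potential U, and let all of them satisfy the DSII evolution equations. Then the M₂(ℂ)-valued 1-form M dz + N dz̄ + Q dt is closed; that is, at every point of ℂ×ℝ one has the matrix identities M_z̄ = N_z, M_t = Q_z and N_t = Q_z̄. -/
open Complex ComplexConjugate Matrix

noncomputable section

/-- Wirtinger derivative ∂_z for a function of (z,t) ∈ ℂ×ℝ. -/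
def dz (g : ℂ × ℝ → ℂ) (p : ℂ × ℝ) : ℂ :=
  (2 : ℂ)⁻¹ * (fderiv ℝ g p (1, 0) - Complex.I * fderiv ℝ g p (Complex.I, 0))

/-- Wirtinger derivative ∂_z̄ for a function of (z,t) ∈ ℂ×ℝ. -/
def dzb (g : ℂ × ℝ → ℂ) (p : ℂ × ℝ) : ℂ :=
  (2 : ℂ)⁻¹ * (fderiv ℝ g p (1, 0) + Complex.I * fderiv ℝ g p (Complex.I, 0))

/-- Time derivative ∂_t for a function of (z,t) ∈ ℂ×ℝ. -/
def dt (g : ℂ × ℝ → ℂ) (p : ℂ × ℝ) : ℂ :=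
  fderiv ℝ g p (0, 1)

/-- Entrywise ∂_z of a matrix-valued function. -/
def mdz (F : ℂ × ℝ → Matrix (Fin 2) (Fin 2) ℂ) (p : ℂ × ℝ) : Matrix (Fin 2) (Fin 2) ℂ :=
  Matrix.of fun i j => dz (fun q => F q i j) p

/-- Entrywise ∂_z̄ of a matrix-valued function. -/
def mdzb (F : ℂ × ℝ → Matrix (Fin 2) (Fin 2) ℂ) (p : ℂ × ℝ) : Matrix (Fin 2) (Fin 2) ℂ :=
  Matrix.of fun i j => dzb (fun q => F q i j) p

/-- Entrywise ∂_t of a matrix-valued function. -/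
def mdt (F : ℂ × ℝ → Matrix (Fin 2) (Fin 2) ℂ) (p : ℂ × ℝ) : Matrix (Fin 2) (Fin 2) ℂ :=
  Matrix.of fun i j => dt (fun q => F q i j) p

/-- The pair (U,V) solves the Davey–Stewartson II equation. -/
def DSII (U V : ℂ × ℝ → ℂ) : Prop :=
  (∀ p, dt U p = Complex.I *
      (dz (dz U) p + dzb (dzb U) p + (V p + conj (V p)) * U p)) ∧
  (∀ p, dzb V p = 2 * dz (fun q => U q * conj (U q)) p)

/-- (ψ₁,ψ₂) satisfies the Dirac equation with potential U. -/
def Dirac (U ψ₁ ψ₂ : ℂ × ℝ → ℂ) : Prop :=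
  ∀ p, dz ψ₂ p = -(U p) * ψ₁ p ∧ dzb ψ₁ p = conj (U p) * ψ₂ p

/-- (φ₁,φ₂) satisfies the conjugate Dirac equation with potential U. -/
def DiracV (U φ₁ φ₂ : ℂ × ℝ → ℂ) : Prop :=
  ∀ p, dz φ₂ p = -(conj (U p)) * φ₁ p ∧ dzb φ₁ p = U p * φ₂ p

/-- The DSII evolution equations for the spinor (ψ₁,ψ₂). -/
def EvolPsi (U V ψ₁ ψ₂ : ℂ × ℝ → ℂ) : Prop :=
  (∀ p, dt ψ₁ p = Complex.I *
      (-(dz (dz ψ₁) p) - V p * ψ₁ p + conj (U p) * dzb ψ₂ p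
        - dzb (fun q => conj (U q)) p * ψ₂ p)) ∧
  (∀ p, dt ψ₂ p = Complex.I *
      (U p * dz ψ₁ p - dz U p * ψ₁ p + dzb (dzb ψ₂) p + conj (V p) * ψ₂ p))

/-- The DSII evolution equations for the spinor (φ₁,φ₂). -/
def EvolPhi (U V φ₁ φ₂ : ℂ × ℝ → ℂ) : Prop :=
  (∀ p, dt φ₁ p = -Complex.I *
      (-(dz (dz φ₁) p) - V p * φ₁ p + U p * dzb φ₂ p - dzb U p * φ₂ p)) ∧
  (∀ p, dt φ₂ p = -Complex.I *
      (conj (U p) * dz φ₁ p - dz (fun q => conj (U q)) p * φ₁ p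
        + dzb (dzb φ₂) p + conj (V p) * φ₂ p))

/-- The quaternion-type matrix built from a spinor. -/
def spinMat (ψ₁ ψ₂ : ℂ × ℝ → ℂ) (p : ℂ × ℝ) : Matrix (Fin 2) (Fin 2) ℂ :=
  !![ψ₁ p, -conj (ψ₂ p); ψ₂ p, conj (ψ₁ p)]

def Gam : Matrix (Fin 2) (Fin 2) ℂ := !![0, 1; -1, 0]

/-- The matrix M (the dz-component of the closed 1-form). -/
def Mform (ψ₁ ψ₂ φ₁ φ₂ : ℂ × ℝ → ℂ) (p : ℂ × ℝ) : Matrix (Fin 2) (Fin 2) ℂ :=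
  Complex.I • !![ψ₁ p * conj (φ₂ p), -conj (ψ₂ p) * conj (φ₂ p);
                 ψ₁ p * φ₁ p, -conj (ψ₂ p) * φ₁ p]

/-- The matrix N (the dz̄-component of the closed 1-form). -/
def Nform (ψ₁ ψ₂ φ₁ φ₂ : ℂ × ℝ → ℂ) (p : ℂ × ℝ) : Matrix (Fin 2) (Fin 2) ℂ :=
  Complex.I • !![ψ₂ p * conj (φ₁ p), conj (ψ₁ p) * conj (φ₁ p);
                 -(ψ₂ p * φ₂ p), -conj (ψ₁ p) * φ₂ p]

/-- The matrix Q (the dt-component of the closed 1-form). -/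
def Qform (ψ₁ ψ₂ φ₁ φ₂ : ℂ × ℝ → ℂ) (p : ℂ × ℝ) : Matrix (Fin 2) (Fin 2) ℂ :=
  !![dz ψ₁ p * conj (φ₂ p) - ψ₁ p * dz (fun q => conj (φ₂ q)) p
       + ψ₂ p * dzb (fun q => conj (φ₁ q)) p - dzb ψ₂ p * conj (φ₁ p),
     conj (ψ₁ p) * dzb (fun q => conj (φ₁ q)) p - dzb (fun q => conj (ψ₁ q)) p * conj (φ₁ p)
       + conj (ψ₂ p) * dz (fun q => conj (φ₂ q)) p - dz (fun q => conj (ψ₂ q)) p * conj (φ₂ p);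
     dz ψ₁ p * φ₁ p - ψ₁ p * dz φ₁ p + dzb ψ₂ p * φ₂ p - ψ₂ p * dzb φ₂ p,
     conj (ψ₂ p) * dz φ₁ p - dz (fun q => conj (ψ₂ q)) p * φ₁ p
       + dzb (fun q => conj (ψ₁ q)) p * φ₂ p - conj (ψ₁ p) * dzb φ₂ p]

/-- K = Ψ S⁻¹ Γ Φᵀ Γ⁻¹. -/
def Kmat (ψ₁ ψ₂ φ₁ φ₂ : ℂ × ℝ → ℂ) (S : ℂ × ℝ → Matrix (Fin 2) (Fin 2) ℂ)
    (p : ℂ × ℝ) : Matrix (Fin 2) (Fin 2) ℂ :=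
  spinMat ψ₁ ψ₂ p * (S p)⁻¹ * Gam * (spinMat φ₁ φ₂ p)ᵀ * Gam⁻¹


namespace DSAux

variable {f g : ℂ × ℝ → ℂ} {p : ℂ × ℝ} {c : ℂ}

lemma diffat (hf : ContDiff ℝ (⊤ : ℕ∞) f) : DifferentiableAt ℝ f p :=
  (hf.differentiable (by simp)).differentiableAt

@[fun_prop] lemma contDiff_conj (hf : ContDiff ℝ (⊤ : ℕ∞) f) :
    ContDiff ℝ (⊤ : ℕ∞) (fun q => conj (f q)) := by
  simp only [starRingEnd_apply]
  exact ((starL' ℝ : ℂ ≃L[ℝ] ℂ) : ℂ →L[ℝ] ℂ).contDiff.comp hf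

lemma contDiff_fderiv_apply (hf : ContDiff ℝ (⊤ : ℕ∞) f) (v : ℂ × ℝ) :
    ContDiff ℝ (⊤ : ℕ∞) (fun p => fderiv ℝ f p v) :=
  (ContinuousLinearMap.apply ℝ ℂ v).contDiff.comp (hf.fderiv_right (by simp))

@[fun_prop] lemma contDiff_dz (hf : ContDiff ℝ (⊤ : ℕ∞) f) : ContDiff ℝ (⊤ : ℕ∞) (dz f) :=
  contDiff_const.mul ((contDiff_fderiv_apply hf _).sub
    (contDiff_const.mul (contDiff_fderiv_apply hf _)))

@[fun_prop] lemma contDiff_dzb (hf : ContDiff ℝ (⊤ : ℕ∞) f) : ContDiff ℝ (⊤ : ℕ∞) (dzb f) :=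
  contDiff_const.mul ((contDiff_fderiv_apply hf _).add
    (contDiff_const.mul (contDiff_fderiv_apply hf _)))

@[fun_prop] lemma contDiff_dt (hf : ContDiff ℝ (⊤ : ℕ∞) f) : ContDiff ℝ (⊤ : ℕ∞) (dt f) :=
  contDiff_fderiv_apply hf _

lemma fderiv_conj_apply (hf : ContDiff ℝ (⊤ : ℕ∞) f) (v : ℂ × ℝ) :
    fderiv ℝ (fun q => conj (f q)) p v = conj (fderiv ℝ f p v) := by
  have h : (fun q => conj (f q)) = (fun q => star (f q)) := rfl
  rw [h, fderiv_star, ContinuousLinearMap.comp_apply]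
  rfl

/- derivative rules -/
lemma dz_const (c : ℂ) : dz (fun _ => c) p = 0 := by simp [dz]
lemma dzb_const (c : ℂ) : dzb (fun _ => c) p = 0 := by simp [dzb]
lemma dt_const (c : ℂ) : dt (fun _ => c) p = 0 := by simp [dt]

lemma dz_add (hf : ContDiff ℝ (⊤ : ℕ∞) f) (hg : ContDiff ℝ (⊤ : ℕ∞) g) :
    dz (fun q => f q + g q) p = dz f p + dz g p := by
  simp [dz, fderiv_fun_add (diffat hf) (diffat hg)]; ring
lemma dzb_add (hf : ContDiff ℝ (⊤ : ℕ∞) f) (hg : ContDiff ℝ (⊤ : ℕ∞) g) :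
    dzb (fun q => f q + g q) p = dzb f p + dzb g p := by
  simp [dzb, fderiv_fun_add (diffat hf) (diffat hg)]; ring
lemma dt_add (hf : ContDiff ℝ (⊤ : ℕ∞) f) (hg : ContDiff ℝ (⊤ : ℕ∞) g) :
    dt (fun q => f q + g q) p = dt f p + dt g p := by
  simp [dt, fderiv_fun_add (diffat hf) (diffat hg)]

lemma dz_sub (hf : ContDiff ℝ (⊤ : ℕ∞) f) (hg : ContDiff ℝ (⊤ : ℕ∞) g) :
    dz (fun q => f q - g q) p = dz f p - dz g p := by
  simp [dz, fderiv_fun_sub (diffat hf) (diffat hg)]; ring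
lemma dzb_sub (hf : ContDiff ℝ (⊤ : ℕ∞) f) (hg : ContDiff ℝ (⊤ : ℕ∞) g) :
    dzb (fun q => f q - g q) p = dzb f p - dzb g p := by
  simp [dzb, fderiv_fun_sub (diffat hf) (diffat hg)]; ring
lemma dt_sub (hf : ContDiff ℝ (⊤ : ℕ∞) f) (hg : ContDiff ℝ (⊤ : ℕ∞) g) :
    dt (fun q => f q - g q) p = dt f p - dt g p := by
  simp [dt, fderiv_fun_sub (diffat hf) (diffat hg)]

lemma dz_neg : dz (fun q => -(f q)) p = -(dz f p) := by
  simp [dz, fderiv_neg]; ring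
lemma dzb_neg : dzb (fun q => -(f q)) p = -(dzb f p) := by
  simp [dzb, fderiv_neg]; ring
lemma dt_neg : dt (fun q => -(f q)) p = -(dt f p) := by
  simp [dt, fderiv_neg]

lemma dz_mul (hf : ContDiff ℝ (⊤ : ℕ∞) f) (hg : ContDiff ℝ (⊤ : ℕ∞) g) :
    dz (fun q => f q * g q) p = dz f p * g p + f p * dz g p := by
  simp [dz, fderiv_fun_mul (diffat hf) (diffat hg), smul_eq_mul]; ring
lemma dzb_mul (hf : ContDiff ℝ (⊤ : ℕ∞) f) (hg : ContDiff ℝ (⊤ : ℕ∞) g) :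
    dzb (fun q => f q * g q) p = dzb f p * g p + f p * dzb g p := by
  simp [dzb, fderiv_fun_mul (diffat hf) (diffat hg), smul_eq_mul]; ring
lemma dt_mul (hf : ContDiff ℝ (⊤ : ℕ∞) f) (hg : ContDiff ℝ (⊤ : ℕ∞) g) :
    dt (fun q => f q * g q) p = dt f p * g p + f p * dt g p := by
  simp [dt, fderiv_fun_mul (diffat hf) (diffat hg), smul_eq_mul]; ring

lemma dz_conj (hf : ContDiff ℝ (⊤ : ℕ∞) f) :
    dz (fun q => conj (f q)) p = conj (dzb f p) := by
  simp [dz, dzb, fderiv_conj_apply hf, _root_.map_mul, map_ofNat, Complex.conj_I]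
  ring
lemma dzb_conj (hf : ContDiff ℝ (⊤ : ℕ∞) f) :
    dzb (fun q => conj (f q)) p = conj (dz f p) := by
  simp [dz, dzb, fderiv_conj_apply hf, _root_.map_mul, map_ofNat, Complex.conj_I]
lemma dt_conj (hf : ContDiff ℝ (⊤ : ℕ∞) f) :
    dt (fun q => conj (f q)) p = conj (dt f p) := by
  simp [dt, fderiv_conj_apply hf]

/- symmetry of second derivatives -/
lemma fderiv2_symm (hf : ContDiff ℝ (⊤ : ℕ∞) f) (p : ℂ × ℝ) (v w : ℂ × ℝ) :
    fderiv ℝ (fun q => fderiv ℝ f q v) p w = fderiv ℝ (fun q => fderiv ℝ f q w) p v := by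
  have hd : ∀ q, HasFDerivAt f (fderiv ℝ f q) q := fun q =>
    ((hf.differentiable (by simp)) q).hasFDerivAt
  have hdf : DifferentiableAt ℝ (fderiv ℝ f) p :=
    (((hf.fderiv_right (m := (⊤ : ℕ∞)) (by simp)).differentiable (by simp)) p)
  have e : ∀ u : ℂ × ℝ, fderiv ℝ (fun q => fderiv ℝ f q u) p
      = (fderiv ℝ (fderiv ℝ f) p).flip u := by
    intro u
    rw [fderiv_clm_apply hdf (differentiableAt_const u)]
    simp
  rw [e, e]
  exact second_derivative_symmetric hd hdf.hasFDerivAt w v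

lemma fderiv_comb (hf : ContDiff ℝ (⊤ : ℕ∞) f) (c : ℂ) (v w u : ℂ × ℝ) :
    fderiv ℝ (fun q => (2:ℂ)⁻¹ * (fderiv ℝ f q v + c * fderiv ℝ f q w)) p u
      = (2:ℂ)⁻¹ * (fderiv ℝ (fun q => fderiv ℝ f q v) p u
          + c * fderiv ℝ (fun q => fderiv ℝ f q w) p u) := by
  have hv := contDiff_fderiv_apply hf v
  have hw := contDiff_fderiv_apply hf w
  rw [fderiv_const_mul (by exact (diffat hv).add ((diffat (contDiff_const.mul hw))))]
  rw [fderiv_fun_add (diffat hv) (diffat (contDiff_const.mul hw)),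
    fderiv_const_mul (diffat hw)]
  simp only [ContinuousLinearMap.add_apply, ContinuousLinearMap.coe_smul', Pi.smul_apply,
    smul_eq_mul]

lemma fderiv_combs (hf : ContDiff ℝ (⊤ : ℕ∞) f) (c : ℂ) (v w u : ℂ × ℝ) :
    fderiv ℝ (fun q => (2:ℂ)⁻¹ * (fderiv ℝ f q v - c * fderiv ℝ f q w)) p u
      = (2:ℂ)⁻¹ * (fderiv ℝ (fun q => fderiv ℝ f q v) p u
          - c * fderiv ℝ (fun q => fderiv ℝ f q w) p u) := by
  have hv := contDiff_fderiv_apply hf v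
  have hw := contDiff_fderiv_apply hf w
  rw [fderiv_const_mul (by exact (diffat hv).sub ((diffat (contDiff_const.mul hw))))]
  rw [fderiv_fun_sub (diffat hv) (diffat (contDiff_const.mul hw)),
    fderiv_const_mul (diffat hw)]
  simp only [ContinuousLinearMap.sub_apply, ContinuousLinearMap.coe_smul', Pi.smul_apply,
    smul_eq_mul]

lemma dz_dzb_comm (hf : ContDiff ℝ (⊤ : ℕ∞) f) (p : ℂ × ℝ) : dz (dzb f) p = dzb (dz f) p := by
  show (2:ℂ)⁻¹ * (fderiv ℝ (fun q => (2:ℂ)⁻¹ * (fderiv ℝ f q (1,0) + Complex.I * fderiv ℝ f q (Complex.I,0))) p (1, 0)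
      - Complex.I * fderiv ℝ (fun q => (2:ℂ)⁻¹ * (fderiv ℝ f q (1,0) + Complex.I * fderiv ℝ f q (Complex.I,0))) p (Complex.I, 0))
    = (2:ℂ)⁻¹ * (fderiv ℝ (fun q => (2:ℂ)⁻¹ * (fderiv ℝ f q (1,0) - Complex.I * fderiv ℝ f q (Complex.I,0))) p (1, 0)
      + Complex.I * fderiv ℝ (fun q => (2:ℂ)⁻¹ * (fderiv ℝ f q (1,0) - Complex.I * fderiv ℝ f q (Complex.I,0))) p (Complex.I, 0))
  rw [fderiv_comb hf, fderiv_comb hf, fderiv_combs hf, fderiv_combs hf,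
    fderiv2_symm hf p ((Complex.I : ℂ), (0:ℝ)) ((1:ℂ), (0:ℝ))]
  ring

lemma dt_dz_comm (hf : ContDiff ℝ (⊤ : ℕ∞) f) (p : ℂ × ℝ) : dt (dz f) p = dz (dt f) p := by
  show fderiv ℝ (fun q => (2:ℂ)⁻¹ * (fderiv ℝ f q (1,0) - Complex.I * fderiv ℝ f q (Complex.I,0))) p (0, 1)
    = (2:ℂ)⁻¹ * (fderiv ℝ (fun q => fderiv ℝ f q (0,1)) p (1, 0)
        - Complex.I * fderiv ℝ (fun q => fderiv ℝ f q (0,1)) p (Complex.I, 0))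
  rw [fderiv_combs hf, fderiv2_symm hf p ((1:ℂ), (0:ℝ)) ((0:ℂ), (1:ℝ)),
    fderiv2_symm hf p ((Complex.I : ℂ), (0:ℝ)) ((0:ℂ), (1:ℝ))]

lemma dt_dzb_comm (hf : ContDiff ℝ (⊤ : ℕ∞) f) (p : ℂ × ℝ) : dt (dzb f) p = dzb (dt f) p := by
  show fderiv ℝ (fun q => (2:ℂ)⁻¹ * (fderiv ℝ f q (1,0) + Complex.I * fderiv ℝ f q (Complex.I,0))) p (0, 1)
    = (2:ℂ)⁻¹ * (fderiv ℝ (fun q => fderiv ℝ f q (0,1)) p (1, 0)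
        + Complex.I * fderiv ℝ (fun q => fderiv ℝ f q (0,1)) p (Complex.I, 0))
  rw [fderiv_comb hf, fderiv2_symm hf p ((1:ℂ), (0:ℝ)) ((0:ℂ), (1:ℝ)),
    fderiv2_symm hf p ((Complex.I : ℂ), (0:ℝ)) ((0:ℂ), (1:ℝ))]

end DSAux

/-- The 1-form M dz + N dz̄ + Q dt built from DSII spinor data is closed. -/
theorem DSII_one_form_closed
    (U V ψ₁ ψ₂ φ₁ φ₂ : ℂ × ℝ → ℂ)
    (hU : ContDiff ℝ (⊤ : ℕ∞) U) (hV : ContDiff ℝ (⊤ : ℕ∞) V)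
    (hψ₁ : ContDiff ℝ (⊤ : ℕ∞) ψ₁) (hψ₂ : ContDiff ℝ (⊤ : ℕ∞) ψ₂)
    (hφ₁ : ContDiff ℝ (⊤ : ℕ∞) φ₁) (hφ₂ : ContDiff ℝ (⊤ : ℕ∞) φ₂)
    (hDSII : DSII U V)
    (hDirac : Dirac U ψ₁ ψ₂) (hDiracV : DiracV U φ₁ φ₂)
    (hEvolψ : EvolPsi U V ψ₁ ψ₂) (hEvolφ : EvolPhi U V φ₁ φ₂) :
    ∀ p : ℂ × ℝ,
      mdzb (Mform ψ₁ ψ₂ φ₁ φ₂) p = mdz (Nform ψ₁ ψ₂ φ₁ φ₂) p ∧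
      mdt (Mform ψ₁ ψ₂ φ₁ φ₂) p = mdz (Qform ψ₁ ψ₂ φ₁ φ₂) p ∧
      mdt (Nform ψ₁ ψ₂ φ₁ φ₂) p = mdzb (Qform ψ₁ ψ₂ φ₁ φ₂) p := by
  have hD1 : ∀ p, dz ψ₂ p = -(U p) * ψ₁ p := fun p => (hDirac p).1
  have hD2 : ∀ p, dzb ψ₁ p = conj (U p) * ψ₂ p := fun p => (hDirac p).2
  have hD3 : ∀ p, dz φ₂ p = -(conj (U p)) * φ₁ p := fun p => (hDiracV p).1
  have hD4 : ∀ p, dzb φ₁ p = U p * φ₂ p := fun p => (hDiracV p).2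
  have hE1 := hEvolψ.1
  have hE2 := hEvolψ.2
  have hE3 := hEvolφ.1
  have hE4 := hEvolφ.2
  have hF2 : dz ψ₂ = fun q => -(U q) * ψ₁ q := funext hD1
  have hF1 : dzb ψ₁ = fun q => conj (U q) * ψ₂ q := funext hD2
  have hF4 : dz φ₂ = fun q => -(conj (U q)) * φ₁ q := funext hD3
  have hF3 : dzb φ₁ = fun q => U q * φ₂ q := funext hD4
  have hc1 : ∀ p, dz (dzb ψ₂) p = dzb (fun q => -(U q) * ψ₁ q) p := fun p => by
    rw [DSAux.dz_dzb_comm hψ₂, hF2]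
  have hc2 : ∀ p, dzb (dz ψ₁) p = dz (fun q => conj (U q) * ψ₂ q) p := fun p => by
    rw [← DSAux.dz_dzb_comm hψ₁, hF1]
  have hc3 : ∀ p, dz (dzb φ₂) p = dzb (fun q => -(conj (U q)) * φ₁ q) p := fun p => by
    rw [DSAux.dz_dzb_comm hφ₂, hF4]
  have hc4 : ∀ p, dzb (dz φ₁) p = dz (fun q => U q * φ₂ q) p := fun p => by
    rw [← DSAux.dz_dzb_comm hφ₁, hF3]
  intro p
  refine ⟨?_, ?_, ?_⟩ <;> ext i j <;> fin_cases i <;> fin_cases j <;>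
  · simp only [mdz, mdzb, mdt, Mform, Nform, Qform, Matrix.of_apply, Matrix.smul_apply,
      smul_eq_mul, Matrix.cons_val', Matrix.cons_val_zero, Matrix.cons_val_one,
      Matrix.head_cons, Matrix.head_fin_const, Matrix.empty_val', Matrix.cons_val_fin_one,
      Fin.zero_eta, Fin.mk_one, Fin.isValue]
    simp (disch := fun_prop) only [DSAux.dz_add, DSAux.dz_sub, DSAux.dz_neg, DSAux.dz_mul,
      DSAux.dz_conj, DSAux.dz_const, DSAux.dzb_add, DSAux.dzb_sub, DSAux.dzb_neg,
      DSAux.dzb_mul, DSAux.dzb_conj, DSAux.dzb_const, DSAux.dt_add, DSAux.dt_sub,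
      DSAux.dt_neg, DSAux.dt_mul, DSAux.dt_conj, DSAux.dt_const,
      hD1, hD2, hD3, hD4, hc1, hc2, hc3, hc4, hE1, hE2, hE3, hE4,
      _root_.map_mul, map_add, map_sub, map_neg, Complex.conj_conj, Complex.conj_I]
    ring_nf
    try (simp only [Complex.I_sq]; ring_nf)
end
end

section
/- Let U, V : ℂ×ℝ → ℂ be smooth, let ψ₁, ψ₂ satisfy the Dirac equation with potential U, let φ₁, φ₂ satisfy the conjugate Dirac equation with potential U, and let all of them satisfy the DSII evolution equations. Then at every point of ℂ×ℝ one has the identity (ψ₁·φ̄₂)_t = i·∂_z( ψ₁·(φ̄₂)_z − (ψ₁)_z·φ̄₂ + (ψ₂)_z̄·φ̄₁ − ψ₂·(φ̄₁)_z̄ ). -/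
open Complex ComplexConjugate Matrix

noncomputable section

section infra
variable {f g : ℂ × ℝ → ℂ} {p : ℂ × ℝ} {v : ℂ × ℝ}

lemma fderiv_conj_eq (g : ℂ × ℝ → ℂ) (p v : ℂ × ℝ) :
    fderiv ℝ (fun q => conj (g q)) p v = conj (fderiv ℝ g p v) := by
  have : (fun q => conj (g q)) = (Complex.conjCLE : ℂ ≃L[ℝ] ℂ) ∘ g := rfl
  rw [this, ContinuousLinearEquiv.comp_fderiv]
  rfl

lemma dz_conj (g : ℂ × ℝ → ℂ) (p : ℂ × ℝ) :
    dz (fun q => conj (g q)) p = conj (dzb g p) := by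
  simp only [dz, dzb, fderiv_conj_eq, _root_.map_mul, _root_.map_add, map_inv₀, Complex.conj_I,
    Complex.conj_ofNat]
  ring

lemma dzb_conj (g : ℂ × ℝ → ℂ) (p : ℂ × ℝ) :
    dzb (fun q => conj (g q)) p = conj (dz g p) := by
  simp only [dz, dzb, fderiv_conj_eq, _root_.map_mul, _root_.map_sub, map_inv₀, Complex.conj_I,
    Complex.conj_ofNat]
  ring

lemma dt_conj (g : ℂ × ℝ → ℂ) (p : ℂ × ℝ) :
    dt (fun q => conj (g q)) p = conj (dt g p) := fderiv_conj_eq g p _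

lemma dz_mul (hf : DifferentiableAt ℝ f p) (hg : DifferentiableAt ℝ g p) :
    dz (fun q => f q * g q) p = dz f p * g p + f p * dz g p := by
  simp only [dz, fderiv_fun_mul hf hg, ContinuousLinearMap.add_apply,
    ContinuousLinearMap.smul_apply, smul_eq_mul]
  ring

lemma dzb_mul (hf : DifferentiableAt ℝ f p) (hg : DifferentiableAt ℝ g p) :
    dzb (fun q => f q * g q) p = dzb f p * g p + f p * dzb g p := by
  simp only [dzb, fderiv_fun_mul hf hg, ContinuousLinearMap.add_apply,
    ContinuousLinearMap.smul_apply, smul_eq_mul]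
  ring

lemma dt_mul (hf : DifferentiableAt ℝ f p) (hg : DifferentiableAt ℝ g p) :
    dt (fun q => f q * g q) p = dt f p * g p + f p * dt g p := by
  simp only [dt, fderiv_fun_mul hf hg, ContinuousLinearMap.add_apply,
    ContinuousLinearMap.smul_apply, smul_eq_mul]
  ring

lemma dz_add (hf : DifferentiableAt ℝ f p) (hg : DifferentiableAt ℝ g p) :
    dz (fun q => f q + g q) p = dz f p + dz g p := by
  simp only [dz, fderiv_fun_add hf hg, ContinuousLinearMap.add_apply]
  ring

lemma dz_sub (hf : DifferentiableAt ℝ f p) (hg : DifferentiableAt ℝ g p) :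
    dz (fun q => f q - g q) p = dz f p - dz g p := by
  simp only [dz, fderiv_fun_sub hf hg, ContinuousLinearMap.sub_apply]
  ring

lemma dzb_neg (g : ℂ × ℝ → ℂ) (p : ℂ × ℝ) :
    dzb (fun q => -(g q)) p = -(dzb g p) := by
  simp only [dzb, fderiv_fun_neg, ContinuousLinearMap.neg_apply]
  ring

-- smoothness of Wirtinger derivatives
lemma dz_smooth (hg : ContDiff ℝ (⊤ : ℕ∞) g) : ContDiff ℝ (⊤ : ℕ∞) (dz g) := by
  have h1 : ContDiff ℝ (⊤ : ℕ∞) (fun q => fderiv ℝ g q (1, 0)) :=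
    (hg.fderiv_right (by simp)).clm_apply contDiff_const
  have h2 : ContDiff ℝ (⊤ : ℕ∞) (fun q => fderiv ℝ g q (Complex.I, 0)) :=
    (hg.fderiv_right (by simp)).clm_apply contDiff_const
  exact contDiff_const.mul (h1.sub (contDiff_const.mul h2))

lemma dzb_smooth (hg : ContDiff ℝ (⊤ : ℕ∞) g) : ContDiff ℝ (⊤ : ℕ∞) (dzb g) := by
  have h1 : ContDiff ℝ (⊤ : ℕ∞) (fun q => fderiv ℝ g q (1, 0)) :=
    (hg.fderiv_right (by simp)).clm_apply contDiff_const
  have h2 : ContDiff ℝ (⊤ : ℕ∞) (fun q => fderiv ℝ g q (Complex.I, 0)) :=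
    (hg.fderiv_right (by simp)).clm_apply contDiff_const
  exact contDiff_const.mul (h1.add (contDiff_const.mul h2))

lemma conj_smooth (hg : ContDiff ℝ (⊤ : ℕ∞) g) : ContDiff ℝ (⊤ : ℕ∞) (fun q => conj (g q)) :=
  (Complex.conjCLE : ℂ ≃L[ℝ] ℂ).toContinuousLinearMap.contDiff.comp hg

-- second derivative symmetry
lemma snd_symm (hg : ContDiff ℝ (⊤ : ℕ∞) g) (v w p : ℂ × ℝ) :
    fderiv ℝ (fun q => fderiv ℝ g q v) p w = fderiv ℝ (fun q => fderiv ℝ g q w) p v := by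
  have hd : DifferentiableAt ℝ (fderiv ℝ g) p :=
    ((hg.fderiv_right (m := (⊤ : ℕ∞)) (by simp)).differentiable (by simp)).differentiableAt
  have key : ∀ u : ℂ × ℝ, fderiv ℝ (fun q => fderiv ℝ g q u) p
      = (fderiv ℝ (fderiv ℝ g) p).flip u := by
    intro u
    rw [fderiv_clm_apply hd (differentiableAt_const u)]
    simp
  rw [key, key]
  exact (hg.contDiffAt.isSymmSndFDerivAt (by rw [minSmoothness_of_isRCLikeNormedField]; exact WithTop.coe_le_coe.mpr le_top)) w v

lemma dz_dzb_comm (hg : ContDiff ℝ (⊤ : ℕ∞) g) (p : ℂ × ℝ) :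
    dz (dzb g) p = dzb (dz g) p := by
  have h1 : ContDiff ℝ (⊤ : ℕ∞) (fun q => fderiv ℝ g q (1, 0)) :=
    (hg.fderiv_right (by simp)).clm_apply contDiff_const
  have h2 : ContDiff ℝ (⊤ : ℕ∞) (fun q => fderiv ℝ g q (Complex.I, 0)) :=
    (hg.fderiv_right (by simp)).clm_apply contDiff_const
  have e1 : dzb g = fun q => (2:ℂ)⁻¹ * (fderiv ℝ g q (1,0) + Complex.I * fderiv ℝ g q (Complex.I,0)) := rfl
  have e2 : dz g = fun q => (2:ℂ)⁻¹ * (fderiv ℝ g q (1,0) - Complex.I * fderiv ℝ g q (Complex.I,0)) := rfl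
  have hda : DifferentiableAt ℝ (fun q => fderiv ℝ g q (1,0)) p :=
    (h1.differentiable (by simp)).differentiableAt
  have hdb : DifferentiableAt ℝ (fun q => fderiv ℝ g q (Complex.I,0)) p :=
    (h2.differentiable (by simp)).differentiableAt
  have fa : ∀ u, fderiv ℝ (fun q => (2:ℂ)⁻¹ * (fderiv ℝ g q (1,0) + Complex.I * fderiv ℝ g q (Complex.I,0))) p u
      = (2:ℂ)⁻¹ * (fderiv ℝ (fun q => fderiv ℝ g q (1,0)) p u
        + Complex.I * fderiv ℝ (fun q => fderiv ℝ g q (Complex.I,0)) p u) := by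
    intro u
    rw [fderiv_const_mul (hda.fun_add (hdb.const_mul _)) , fderiv_fun_add hda (hdb.const_mul _),
      fderiv_const_mul hdb]
    simp only [ContinuousLinearMap.add_apply, ContinuousLinearMap.smul_apply, smul_eq_mul]
  have fb : ∀ u, fderiv ℝ (fun q => (2:ℂ)⁻¹ * (fderiv ℝ g q (1,0) - Complex.I * fderiv ℝ g q (Complex.I,0))) p u
      = (2:ℂ)⁻¹ * (fderiv ℝ (fun q => fderiv ℝ g q (1,0)) p u
        - Complex.I * fderiv ℝ (fun q => fderiv ℝ g q (Complex.I,0)) p u) := by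
    intro u
    rw [fderiv_const_mul (hda.fun_sub (hdb.const_mul _)), fderiv_fun_sub hda (hdb.const_mul _),
      fderiv_const_mul hdb]
    simp only [ContinuousLinearMap.sub_apply, ContinuousLinearMap.smul_apply, smul_eq_mul]
  rw [e1, e2]
  show (2:ℂ)⁻¹ * (fderiv ℝ _ p (1,0) - Complex.I * fderiv ℝ _ p (Complex.I,0))
    = (2:ℂ)⁻¹ * (fderiv ℝ _ p (1,0) + Complex.I * fderiv ℝ _ p (Complex.I,0))
  rw [fa, fa, fb, fb, snd_symm hg (1,0) (Complex.I,0)]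
  ring

end infra

/-- The key identity (ψ₁ φ̄₂)_t = i ∂_z(ψ₁ (φ̄₂)_z − (ψ₁)_z φ̄₂ + (ψ₂)_z̄ φ̄₁ − ψ₂ (φ̄₁)_z̄). -/
theorem DSII_evolution_entry_identity
    (U V ψ₁ ψ₂ φ₁ φ₂ : ℂ × ℝ → ℂ)
    (hU : ContDiff ℝ (⊤ : ℕ∞) U) (hV : ContDiff ℝ (⊤ : ℕ∞) V)
    (hψ₁ : ContDiff ℝ (⊤ : ℕ∞) ψ₁) (hψ₂ : ContDiff ℝ (⊤ : ℕ∞) ψ₂)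
    (hφ₁ : ContDiff ℝ (⊤ : ℕ∞) φ₁) (hφ₂ : ContDiff ℝ (⊤ : ℕ∞) φ₂)
    (hDirac : Dirac U ψ₁ ψ₂) (hDiracV : DiracV U φ₁ φ₂)
    (hEvolψ : EvolPsi U V ψ₁ ψ₂) (hEvolφ : EvolPhi U V φ₁ φ₂) :
    ∀ p : ℂ × ℝ,
      dt (fun q => ψ₁ q * conj (φ₂ q)) p =
        Complex.I * dz (fun q =>
          ψ₁ q * dz (fun r => conj (φ₂ r)) q - dz ψ₁ q * conj (φ₂ q)
            + dzb ψ₂ q * conj (φ₁ q) - ψ₂ q * dzb (fun r => conj (φ₁ r)) q) p := by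
  intro p
  -- conjugated functions
  have hφ₁b : ContDiff ℝ (⊤ : ℕ∞) (fun q => conj (φ₁ q)) := conj_smooth hφ₁
  have hφ₂b : ContDiff ℝ (⊤ : ℕ∞) (fun q => conj (φ₂ q)) := conj_smooth hφ₂
  -- differentiability helper
  have da : ∀ {f : ℂ × ℝ → ℂ}, ContDiff ℝ (⊤ : ℕ∞) f → DifferentiableAt ℝ f p :=
    fun h => (h.differentiable (by simp)).differentiableAt
  -- LHS
  have hL : dt (fun q => ψ₁ q * conj (φ₂ q)) p
      = dt ψ₁ p * conj (φ₂ p) + ψ₁ p * conj (dt φ₂ p) := by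
    rw [dt_mul (da hψ₁) (da hφ₂b), dt_conj]
  -- RHS decomposition
  have hT1 : ContDiff ℝ (⊤ : ℕ∞) (fun q => ψ₁ q * dz (fun r => conj (φ₂ r)) q) :=
    hψ₁.mul (dz_smooth hφ₂b)
  have hT2 : ContDiff ℝ (⊤ : ℕ∞) (fun q => dz ψ₁ q * conj (φ₂ q)) :=
    (dz_smooth hψ₁).mul hφ₂b
  have hT3 : ContDiff ℝ (⊤ : ℕ∞) (fun q => dzb ψ₂ q * conj (φ₁ q)) :=
    (dzb_smooth hψ₂).mul hφ₁b
  have hT4 : ContDiff ℝ (⊤ : ℕ∞) (fun q => ψ₂ q * dzb (fun r => conj (φ₁ r)) q) :=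
    hψ₂.mul (dzb_smooth hφ₁b)
  have hR : dz (fun q =>
          ψ₁ q * dz (fun r => conj (φ₂ r)) q - dz ψ₁ q * conj (φ₂ q)
            + dzb ψ₂ q * conj (φ₁ q) - ψ₂ q * dzb (fun r => conj (φ₁ r)) q) p
      = (dz ψ₁ p * dz (fun r => conj (φ₂ r)) p + ψ₁ p * dz (dz (fun r => conj (φ₂ r))) p)
        - (dz (dz ψ₁) p * conj (φ₂ p) + dz ψ₁ p * dz (fun q => conj (φ₂ q)) p)
        + (dz (dzb ψ₂) p * conj (φ₁ p) + dzb ψ₂ p * dz (fun q => conj (φ₁ q)) p)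
        - (dz ψ₂ p * dzb (fun r => conj (φ₁ r)) p + ψ₂ p * dz (dzb (fun r => conj (φ₁ r))) p) := by
    rw [dz_sub (da ((hT1.sub hT2).add hT3)) (da hT4),
        dz_add (da (hT1.sub hT2)) (da hT3),
        dz_sub (da hT1) (da hT2),
        dz_mul (da hψ₁) (da (dz_smooth hφ₂b)),
        dz_mul (da (dz_smooth hψ₁)) (da hφ₂b),
        dz_mul (da (dzb_smooth hψ₂)) (da hφ₁b),
        dz_mul (da hψ₂) (da (dzb_smooth hφ₁b))]
  -- key pointwise identities
  have e1 : dz (fun r => conj (φ₂ r)) p = conj (dzb φ₂ p) := dz_conj φ₂ p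
  have e2 : dz (dz (fun r => conj (φ₂ r))) p = conj (dzb (dzb φ₂) p) := by
    have hfun : dz (fun r => conj (φ₂ r)) = fun q => conj (dzb φ₂ q) :=
      funext fun q => dz_conj φ₂ q
    rw [hfun]
    exact dz_conj (dzb φ₂) p
  have e3 : dz (dzb ψ₂) p = -(dzb U p) * ψ₁ p + (-(U p)) * (conj (U p) * ψ₂ p) := by
    rw [dz_dzb_comm hψ₂ p]
    have hfun : dz ψ₂ = fun q => -(U q) * ψ₁ q := funext fun q => (hDirac q).1
    rw [hfun, dzb_mul (da (hU.neg)) (da hψ₁)]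
    have hneg : dzb (fun q => -(U q)) p = -(dzb U p) := dzb_neg U p
    rw [hneg, (hDirac p).2]
  have e4 : dz ψ₂ p = -(U p) * ψ₁ p := (hDirac p).1
  have e5 : dz (fun q => conj (φ₁ q)) p = conj (U p) * conj (φ₂ p) := by
    rw [dz_conj φ₁ p, (hDiracV p).2, _root_.map_mul]
  have e6 : dzb (fun r => conj (φ₁ r)) p = conj (dz φ₁ p) := dzb_conj φ₁ p
  have e7 : dz (dzb (fun r => conj (φ₁ r))) p
      = conj (dz U p) * conj (φ₂ p) + conj (U p) * (-(U p) * conj (φ₁ p)) := by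
    rw [dz_dzb_comm hφ₁b p]
    have hfun1 : dz (fun r => conj (φ₁ r)) = fun q => conj (U q * φ₂ q) := by
      funext q
      rw [dz_conj φ₁ q, (hDiracV q).2]
    rw [hfun1]
    have : dzb (fun q => conj (U q * φ₂ q)) p = conj (dz (fun q => U q * φ₂ q) p) :=
      dzb_conj _ p
    rw [this, dz_mul (da hU) (da hφ₂), (hDiracV p).1]
    simp only [_root_.map_add, _root_.map_mul, _root_.map_neg, Complex.conj_conj]
  have hUb' : dzb (fun q => conj (U q)) p = conj (dz U p) := dzb_conj U p
  have hψt := hEvolψ.1 p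
  rw [hUb'] at hψt
  have hφt : conj (dt φ₂ p) = Complex.I *
      (U p * conj (dz φ₁ p) - dzb U p * conj (φ₁ p)
        + conj (dzb (dzb φ₂) p) + V p * conj (φ₂ p)) := by
    rw [hEvolφ.2 p, dz_conj U p]
    simp only [_root_.map_mul, _root_.map_add, _root_.map_sub, _root_.map_neg,
      Complex.conj_conj, Complex.conj_I]
    ring
  rw [hL, hR, e1, e2, e3, e4, e5, e6, e7, hψt, hφt]
  ring
end
end

section
/- Let U, V : ℂ×ℝ → ℂ be smooth and solve the DSII equation, let ψ₁, ψ₂ satisfy the Dirac equation with potential U, let φ₁, φ₂ satisfy the conjugate Dirac equation with potential U, and let all of them satisfy the DSII evolution equations. Let S : ℂ×ℝ → M₂(ℂ) be smooth, quaternion-type, invertible at every point, and satisfy S_z = M, S_z̄ = N and S_t = Q. Define Ψ̃ = Ψ S⁻¹ and let Φ̃ be the matrix with Φ̃ᵀ = Γ S⁻¹ Γ Φᵀ. Then at every point the matrix identity (S⁻¹)_t = Γ( Φ̃ᵀ_z E₁₁ + Φ̃ᵀ_z̄ E₂₂ ) Ψ̃ − Γ Φ̃ᵀ( E₁₁ Ψ̃_z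 + E₂₂ Ψ̃_z̄ ) holds, where E₁₁ = [[1,0],[0,0]] and E₂₂ = [[0,0],[0,1]]. -/
open Complex ComplexConjugate Matrix

noncomputable section

namespace DSIIAux

variable {f g : ℂ × ℝ → ℂ} {p : ℂ × ℝ}

theorem fd_mul (hf : DifferentiableAt ℝ f p) (hg : DifferentiableAt ℝ g p) (v : ℂ × ℝ) :
    fderiv ℝ (fun q => f q * g q) p v = f p * fderiv ℝ g p v + fderiv ℝ f p v * g p := by
  rw [fderiv_fun_mul hf hg]
  simp [smul_eq_mul]
  ring

theorem fd_add (hf : DifferentiableAt ℝ f p) (hg : DifferentiableAt ℝ g p) (v : ℂ × ℝ) :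
    fderiv ℝ (fun q => f q + g q) p v = fderiv ℝ f p v + fderiv ℝ g p v := by
  rw [fderiv_fun_add hf hg]; simp

theorem dz_mul (hf : DifferentiableAt ℝ f p) (hg : DifferentiableAt ℝ g p) :
    dz (fun q => f q * g q) p = f p * dz g p + dz f p * g p := by
  simp only [dz, fd_mul hf hg]; ring

theorem dz_add (hf : DifferentiableAt ℝ f p) (hg : DifferentiableAt ℝ g p) :
    dz (fun q => f q + g q) p = dz f p + dz g p := by
  simp only [dz, fd_add hf hg]; ring

@[simp] theorem dz_neg : dz (fun q => -f q) p = -dz f p := by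
  simp only [dz, fderiv_fun_neg, ContinuousLinearMap.neg_apply]; ring

theorem dz_const (c : ℂ) : dz (fun _ => c) p = 0 := by simp [dz]

theorem dzb_mul (hf : DifferentiableAt ℝ f p) (hg : DifferentiableAt ℝ g p) :
    dzb (fun q => f q * g q) p = f p * dzb g p + dzb f p * g p := by
  simp only [dzb, fd_mul hf hg]; ring

theorem dzb_add (hf : DifferentiableAt ℝ f p) (hg : DifferentiableAt ℝ g p) :
    dzb (fun q => f q + g q) p = dzb f p + dzb g p := by
  simp only [dzb, fd_add hf hg]; ring

@[simp] theorem dzb_neg : dzb (fun q => -f q) p = -dzb f p := by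
  simp only [dzb, fderiv_fun_neg, ContinuousLinearMap.neg_apply]; ring

theorem dzb_const (c : ℂ) : dzb (fun _ => c) p = 0 := by simp [dzb]

theorem dt_mul (hf : DifferentiableAt ℝ f p) (hg : DifferentiableAt ℝ g p) :
    dt (fun q => f q * g q) p = f p * dt g p + dt f p * g p := by
  simp only [dt, fd_mul hf hg]

theorem dt_add (hf : DifferentiableAt ℝ f p) (hg : DifferentiableAt ℝ g p) :
    dt (fun q => f q + g q) p = dt f p + dt g p := by
  simp only [dt, fd_add hf hg]

@[simp] theorem dt_neg : dt (fun q => -f q) p = -dt f p := by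
  simp only [dt, fderiv_fun_neg, ContinuousLinearMap.neg_apply]

theorem dt_const (c : ℂ) : dt (fun _ => c) p = 0 := by simp [dt]

def mD (D : (ℂ × ℝ → ℂ) → (ℂ × ℝ) → ℂ) (F : ℂ × ℝ → Matrix (Fin 2) (Fin 2) ℂ)
    (p : ℂ × ℝ) : Matrix (Fin 2) (Fin 2) ℂ :=
  Matrix.of fun i j => D (fun q => F q i j) p

/-- Bundle of derivation laws at a point. -/
structure DerivLaws (D : (ℂ × ℝ → ℂ) → (ℂ × ℝ) → ℂ) (p : ℂ × ℝ) : Prop where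
  add : ∀ {f g : ℂ × ℝ → ℂ}, DifferentiableAt ℝ f p → DifferentiableAt ℝ g p →
    D (fun q => f q + g q) p = D f p + D g p
  mul : ∀ {f g : ℂ × ℝ → ℂ}, DifferentiableAt ℝ f p → DifferentiableAt ℝ g p →
    D (fun q => f q * g q) p = f p * D g p + D f p * g p
  const : ∀ c : ℂ, D (fun _ => c) p = 0

theorem dzLaws (p : ℂ × ℝ) : DerivLaws dz p :=
  ⟨fun hf hg => dz_add hf hg, fun hf hg => dz_mul hf hg, dz_const⟩

theorem dzbLaws (p : ℂ × ℝ) : DerivLaws dzb p :=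
  ⟨fun hf hg => dzb_add hf hg, fun hf hg => dzb_mul hf hg, dzb_const⟩

theorem dtLaws (p : ℂ × ℝ) : DerivLaws dt p :=
  ⟨fun hf hg => dt_add hf hg, fun hf hg => dt_mul hf hg, dt_const⟩

theorem entry_mul_eq (F G : ℂ × ℝ → Matrix (Fin 2) (Fin 2) ℂ) (i j : Fin 2) :
    (fun q => (F q * G q) i j) = fun q => F q i 0 * G q 0 j + F q i 1 * G q 1 j := by
  funext q; simp [Matrix.mul_apply, Fin.sum_univ_two]

theorem diff_entry_mul {F G : ℂ × ℝ → Matrix (Fin 2) (Fin 2) ℂ}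
    (hF : ∀ i j, DifferentiableAt ℝ (fun q => F q i j) p)
    (hG : ∀ i j, DifferentiableAt ℝ (fun q => G q i j) p) :
    ∀ i j, DifferentiableAt ℝ (fun q => (F q * G q) i j) p := by
  intro i j
  rw [entry_mul_eq]
  exact ((hF i 0).mul (hG 0 j)).add ((hF i 1).mul (hG 1 j))

theorem diff_entry_const (C : Matrix (Fin 2) (Fin 2) ℂ) :
    ∀ i j, DifferentiableAt ℝ (fun _ : ℂ × ℝ => C i j) p := fun _ _ => differentiableAt_const _

theorem mD_mul {D} (hD : DerivLaws D p) {F G : ℂ × ℝ → Matrix (Fin 2) (Fin 2) ℂ}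
    (hF : ∀ i j, DifferentiableAt ℝ (fun q => F q i j) p)
    (hG : ∀ i j, DifferentiableAt ℝ (fun q => G q i j) p) :
    mD D (fun q => F q * G q) p = mD D F p * G p + F p * mD D G p := by
  ext i j
  simp only [mD, Matrix.of_apply, entry_mul_eq F G i j, Matrix.add_apply, Matrix.mul_apply,
    Fin.sum_univ_two]
  rw [hD.add (f := fun q => F q i 0 * G q 0 j) (g := fun q => F q i 1 * G q 1 j) ((hF i 0).mul (hG 0 j)) ((hF i 1).mul (hG 1 j)), hD.mul (hF i 0) (hG 0 j),
    hD.mul (hF i 1) (hG 1 j)]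
  ring

theorem mD_const {D} (hD : DerivLaws D p) (C : Matrix (Fin 2) (Fin 2) ℂ) :
    mD D (fun _ => C) p = 0 := by
  ext i j; simp [mD, hD.const]

theorem mD_const_mul {D} (hD : DerivLaws D p) (C : Matrix (Fin 2) (Fin 2) ℂ)
    {F : ℂ × ℝ → Matrix (Fin 2) (Fin 2) ℂ}
    (hF : ∀ i j, DifferentiableAt ℝ (fun q => F q i j) p) :
    mD D (fun q => C * F q) p = C * mD D F p := by
  have := mD_mul hD (F := fun _ => C) (G := F) (diff_entry_const C) hF
  rwa [mD_const hD, Matrix.zero_mul, zero_add] at this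

theorem mD_mul_const {D} (hD : DerivLaws D p) (C : Matrix (Fin 2) (Fin 2) ℂ)
    {F : ℂ × ℝ → Matrix (Fin 2) (Fin 2) ℂ}
    (hF : ∀ i j, DifferentiableAt ℝ (fun q => F q i j) p) :
    mD D (fun q => F q * C) p = mD D F p * C := by
  have := mD_mul hD (F := F) (G := fun _ => C) hF (diff_entry_const C)
  rwa [mD_const hD, Matrix.mul_zero, add_zero] at this

theorem mD_inv {D} (hD : DerivLaws D p) {S T : ℂ × ℝ → Matrix (Fin 2) (Fin 2) ℂ}
    (hST : ∀ q, S q * T q = 1) (hTS : T p * S p = 1)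
    (hS : ∀ i j, DifferentiableAt ℝ (fun q => S q i j) p)
    (hT : ∀ i j, DifferentiableAt ℝ (fun q => T q i j) p) :
    mD D T p = -(T p * mD D S p * T p) := by
  have h0 : mD D (fun q => S q * T q) p = 0 := by
    have he : (fun q => S q * T q) = fun _ => (1 : Matrix (Fin 2) (Fin 2) ℂ) := funext hST
    rw [he, mD_const hD]
  have h1 := mD_mul hD hS hT
  rw [h0] at h1
  have h2 : S p * mD D T p = -(mD D S p * T p) :=
    neg_eq_of_add_eq_zero_right h1.symm |>.symm
  calc mD D T p = T p * S p * mD D T p := by rw [hTS, Matrix.one_mul]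
    _ = T p * (S p * mD D T p) := by rw [Matrix.mul_assoc]
    _ = T p * -(mD D S p * T p) := by rw [h2]
    _ = -(T p * mD D S p * T p) := by rw [Matrix.mul_neg, Matrix.mul_assoc]

theorem tr_lit (a b c d : ℂ) : (!![a, b; c, d])ᵀ = !![a, c; b, d] := by
  ext i j; fin_cases i <;> fin_cases j <;> simp

theorem neg_lit (a b c d : ℂ) : -(!![a, b; c, d]) = !![-a, -b; -c, -d] := by
  ext i j; fin_cases i <;> fin_cases j <;> simp

theorem add_lit (a b c d e f g h : ℂ) :
    !![a, b; c, d] + !![e, f; g, h] = !![a + e, b + f; c + g, d + h] := by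
  ext i j; fin_cases i <;> fin_cases j <;> simp

theorem sub_lit (a b c d e f g h : ℂ) :
    !![a, b; c, d] - !![e, f; g, h] = !![a - e, b - f; c - g, d - h] := by
  ext i j; fin_cases i <;> fin_cases j <;> simp

theorem smul_lit (r a b c d : ℂ) : r • !![a, b; c, d] = !![r * a, r * b; r * c, r * d] := by
  ext i j; fin_cases i <;> fin_cases j <;> simp

end DSIIAux

open DSIIAux in
set_option maxHeartbeats 4000000 in
/-- The inverted surface S⁻¹ also evolves by the DSII deformation equation. -/
theorem inverted_surface_DSII_deformation
    (U V ψ₁ ψ₂ φ₁ φ₂ : ℂ × ℝ → ℂ)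
    (hU : ContDiff ℝ (⊤ : ℕ∞) U) (hV : ContDiff ℝ (⊤ : ℕ∞) V)
    (hψ₁ : ContDiff ℝ (⊤ : ℕ∞) ψ₁) (hψ₂ : ContDiff ℝ (⊤ : ℕ∞) ψ₂)
    (hφ₁ : ContDiff ℝ (⊤ : ℕ∞) φ₁) (hφ₂ : ContDiff ℝ (⊤ : ℕ∞) φ₂)
    (hDSII : DSII U V)
    (hDirac : Dirac U ψ₁ ψ₂) (hDiracV : DiracV U φ₁ φ₂)
    (hEvolψ : EvolPsi U V ψ₁ ψ₂) (hEvolφ : EvolPhi U V φ₁ φ₂)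
    (S : ℂ × ℝ → Matrix (Fin 2) (Fin 2) ℂ)
    (hS : ∀ i j, ContDiff ℝ (⊤ : ℕ∞) (fun q => S q i j))
    (hquat : ∀ p, S p 1 0 = -conj (S p 0 1) ∧ S p 1 1 = conj (S p 0 0))
    (hinv : ∀ p, IsUnit (S p))
    (hSz : ∀ p, mdz S p = Mform ψ₁ ψ₂ φ₁ φ₂ p)
    (hSzb : ∀ p, mdzb S p = Nform ψ₁ ψ₂ φ₁ φ₂ p)
    (hSt : ∀ p, mdt S p = Qform ψ₁ ψ₂ φ₁ φ₂ p) :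
    ∀ p : ℂ × ℝ,
      mdt (fun q => (S q)⁻¹) p =
        Gam * (mdz (fun q => Gam * (S q)⁻¹ * Gam * (spinMat φ₁ φ₂ q)ᵀ) p * !![(1:ℂ),0;0,0]
               + mdzb (fun q => Gam * (S q)⁻¹ * Gam * (spinMat φ₁ φ₂ q)ᵀ) p * !![(0:ℂ),0;0,1])
          * (spinMat ψ₁ ψ₂ p * (S p)⁻¹)
        - Gam * (Gam * (S p)⁻¹ * Gam * (spinMat φ₁ φ₂ p)ᵀ)
          * (!![(1:ℂ),0;0,0] * mdz (fun q => spinMat ψ₁ ψ₂ q * (S q)⁻¹) p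
             + !![(0:ℂ),0;0,1] * mdzb (fun q => spinMat ψ₁ ψ₂ q * (S q)⁻¹) p) := by
  intro p
  -- basic facts about S and its inverse
  have hdet : ∀ q, IsUnit (S q).det := fun q => (Matrix.isUnit_iff_isUnit_det _).1 (hinv q)
  have hdet0 : ∀ q, (S q).det ≠ 0 := fun q => (hdet q).ne_zero
  have hST : ∀ q, S q * (S q)⁻¹ = 1 := fun q => Matrix.mul_nonsing_inv _ (hdet q)
  have hTS : ∀ q, (S q)⁻¹ * S q = 1 := fun q => Matrix.nonsing_inv_mul _ (hdet q)
  have hSd : ∀ (r : ℂ × ℝ) i j, DifferentiableAt ℝ (fun q => S q i j) r :=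
    fun r i j => ((hS i j).differentiable (by simp)) r
  have hdetd : ∀ r, DifferentiableAt ℝ (fun q => (S q).det) r := by
    intro r
    have he : (fun q => (S q).det) = fun q => S q 0 0 * S q 1 1 - S q 0 1 * S q 1 0 := by
      funext q; rw [Matrix.det_fin_two]
    rw [he]
    exact ((hSd r 0 0).mul (hSd r 1 1)).sub ((hSd r 0 1).mul (hSd r 1 0))
  have hadjd : ∀ (r : ℂ × ℝ) i j, DifferentiableAt ℝ (fun q => (S q).adjugate i j) r := by
    intro r i j
    fin_cases i <;> fin_cases j <;>
      simp only [Matrix.adjugate_fin_two, Matrix.cons_val', Matrix.cons_val_zero,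
        Matrix.cons_val_one, Matrix.head_cons, Matrix.head_fin_const, Matrix.empty_val',
        Matrix.cons_val_fin_one]
    · exact hSd r 1 1
    · exact (hSd r 0 1).neg
    · exact (hSd r 1 0).neg
    · exact hSd r 0 0
  have hTd : ∀ (r : ℂ × ℝ) i j, DifferentiableAt ℝ (fun q => (S q)⁻¹ i j) r := by
    intro r i j
    have he : (fun q => (S q)⁻¹ i j) = fun q => ((S q).det)⁻¹ * (S q).adjugate i j := by
      funext q
      rw [Matrix.inv_def]
      simp [Ring.inverse_eq_inv, Matrix.smul_apply, smul_eq_mul]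
    rw [he]
    exact ((differentiableAt_inv (hdet0 r)).comp r (hdetd r)).mul (hadjd r i j)
  -- differentiability of the spinor entries
  have hdS : ∀ (f : ℂ × ℝ → ℂ), ContDiff ℝ (⊤ : ℕ∞) f →
      (∀ r : ℂ × ℝ, DifferentiableAt ℝ f r ∧
        DifferentiableAt ℝ (fun q => conj (f q)) r) := by
    intro f hf r
    refine ⟨(hf.differentiable (by simp)) r, ?_⟩
    have := ((hf.differentiable (by simp)) r).star
    simpa [Complex.star_def] using this
  have hΨd : ∀ (r : ℂ × ℝ) i j, DifferentiableAt ℝ (fun q => spinMat ψ₁ ψ₂ q i j) r := by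
    intro r i j
    fin_cases i <;> fin_cases j <;>
      simp only [spinMat, Matrix.cons_val', Matrix.cons_val_zero, Matrix.cons_val_one,
        Matrix.head_cons, Matrix.head_fin_const, Matrix.empty_val', Matrix.cons_val_fin_one]
    · exact (hdS ψ₁ hψ₁ r).1
    · exact ((hdS ψ₂ hψ₂ r).2).neg
    · exact (hdS ψ₂ hψ₂ r).1
    · exact (hdS ψ₁ hψ₁ r).2
  have hΦtd : ∀ (r : ℂ × ℝ) i j,
      DifferentiableAt ℝ (fun q => (spinMat φ₁ φ₂ q)ᵀ i j) r := by
    intro r i j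
    fin_cases i <;> fin_cases j <;>
      simp only [spinMat, Matrix.transpose_apply, Matrix.cons_val', Matrix.cons_val_zero,
        Matrix.cons_val_one, Matrix.head_cons, Matrix.head_fin_const, Matrix.empty_val',
        Matrix.cons_val_fin_one]
    · exact (hdS φ₁ hφ₁ r).1
    · exact (hdS φ₂ hφ₂ r).1
    · exact ((hdS φ₂ hφ₂ r).2).neg
    · exact (hdS φ₁ hφ₁ r).2
  -- derivative of the inverse
  have hTz : mdz (fun q => (S q)⁻¹) p
      = -((S p)⁻¹ * Mform ψ₁ ψ₂ φ₁ φ₂ p * (S p)⁻¹) := by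
    have h := mD_inv (dzLaws p) hST (hTS p) (hSd p) (hTd p)
    have h2 : mD dz S p = Mform ψ₁ ψ₂ φ₁ φ₂ p := hSz p
    rw [h2] at h
    exact h
  have hTzb : mdzb (fun q => (S q)⁻¹) p
      = -((S p)⁻¹ * Nform ψ₁ ψ₂ φ₁ φ₂ p * (S p)⁻¹) := by
    have h := mD_inv (dzbLaws p) hST (hTS p) (hSd p) (hTd p)
    have h2 : mD dzb S p = Nform ψ₁ ψ₂ φ₁ φ₂ p := hSzb p
    rw [h2] at h
    exact h
  have hTt : mdt (fun q => (S q)⁻¹) p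
      = -((S p)⁻¹ * Qform ψ₁ ψ₂ φ₁ φ₂ p * (S p)⁻¹) := by
    have h := mD_inv (dtLaws p) hST (hTS p) (hSd p) (hTd p)
    have h2 : mD dt S p = Qform ψ₁ ψ₂ φ₁ φ₂ p := hSt p
    rw [h2] at h
    exact h
  -- derivatives of the products appearing on the right-hand side
  have hGTGd : ∀ i j, DifferentiableAt ℝ (fun q => (Gam * (S q)⁻¹ * Gam) i j) p :=
    diff_entry_mul (diff_entry_mul (diff_entry_const Gam) (hTd p)) (diff_entry_const Gam)
  have hsand : ∀ (D : (ℂ × ℝ → ℂ) → (ℂ × ℝ) → ℂ), DerivLaws D p →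
      mD D (fun q => Gam * (S q)⁻¹ * Gam) p = Gam * mD D (fun q => (S q)⁻¹) p * Gam := by
    intro D hD
    rw [mD_mul_const hD Gam (diff_entry_mul (diff_entry_const Gam) (hTd p)),
      mD_const_mul hD Gam (hTd p)]
  have hAz : mdz (fun q => Gam * (S q)⁻¹ * Gam * (spinMat φ₁ φ₂ q)ᵀ) p
      = Gam * (-((S p)⁻¹ * Mform ψ₁ ψ₂ φ₁ φ₂ p * (S p)⁻¹)) * Gam * (spinMat φ₁ φ₂ p)ᵀ
        + Gam * (S p)⁻¹ * Gam * mD dz (fun q => (spinMat φ₁ φ₂ q)ᵀ) p := by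
    have h := mD_mul (dzLaws p) (F := fun q => Gam * (S q)⁻¹ * Gam)
      (G := fun q => (spinMat φ₁ φ₂ q)ᵀ) hGTGd (hΦtd p)
    rw [hsand dz (dzLaws p)] at h
    rw [show mD dz (fun q => (S q)⁻¹) p = -((S p)⁻¹ * Mform ψ₁ ψ₂ φ₁ φ₂ p * (S p)⁻¹) from hTz]
      at h
    exact h
  have hAzb : mdzb (fun q => Gam * (S q)⁻¹ * Gam * (spinMat φ₁ φ₂ q)ᵀ) p
      = Gam * (-((S p)⁻¹ * Nform ψ₁ ψ₂ φ₁ φ₂ p * (S p)⁻¹)) * Gam * (spinMat φ₁ φ₂ p)ᵀ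
        + Gam * (S p)⁻¹ * Gam * mD dzb (fun q => (spinMat φ₁ φ₂ q)ᵀ) p := by
    have h := mD_mul (dzbLaws p) (F := fun q => Gam * (S q)⁻¹ * Gam)
      (G := fun q => (spinMat φ₁ φ₂ q)ᵀ) hGTGd (hΦtd p)
    rw [hsand dzb (dzbLaws p)] at h
    rw [show mD dzb (fun q => (S q)⁻¹) p = -((S p)⁻¹ * Nform ψ₁ ψ₂ φ₁ φ₂ p * (S p)⁻¹) from hTzb]
      at h
    exact h
  have hBz : mdz (fun q => spinMat ψ₁ ψ₂ q * (S q)⁻¹) p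
      = mD dz (fun q => spinMat ψ₁ ψ₂ q) p * (S p)⁻¹
        + spinMat ψ₁ ψ₂ p * (-((S p)⁻¹ * Mform ψ₁ ψ₂ φ₁ φ₂ p * (S p)⁻¹)) := by
    have h := mD_mul (dzLaws p) (F := fun q => spinMat ψ₁ ψ₂ q)
      (G := fun q => (S q)⁻¹) (hΨd p) (hTd p)
    rw [show mD dz (fun q => (S q)⁻¹) p = -((S p)⁻¹ * Mform ψ₁ ψ₂ φ₁ φ₂ p * (S p)⁻¹) from hTz]
      at h
    exact h
  have hBzb : mdzb (fun q => spinMat ψ₁ ψ₂ q * (S q)⁻¹) p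
      = mD dzb (fun q => spinMat ψ₁ ψ₂ q) p * (S p)⁻¹
        + spinMat ψ₁ ψ₂ p * (-((S p)⁻¹ * Nform ψ₁ ψ₂ φ₁ φ₂ p * (S p)⁻¹)) := by
    have h := mD_mul (dzbLaws p) (F := fun q => spinMat ψ₁ ψ₂ q)
      (G := fun q => (S q)⁻¹) (hΨd p) (hTd p)
    rw [show mD dzb (fun q => (S q)⁻¹) p = -((S p)⁻¹ * Nform ψ₁ ψ₂ φ₁ φ₂ p * (S p)⁻¹) from hTzb]
      at h
    exact h
  have hΦz : mD dz (fun q => (spinMat φ₁ φ₂ q)ᵀ) p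
      = !![dz φ₁ p, dz φ₂ p;
          -(dz (fun q => conj (φ₂ q)) p), dz (fun q => conj (φ₁ q)) p] := by
    ext i j
    fin_cases i <;> fin_cases j <;> simp [mD, spinMat]
  have hΦzb : mD dzb (fun q => (spinMat φ₁ φ₂ q)ᵀ) p
      = !![dzb φ₁ p, dzb φ₂ p;
          -(dzb (fun q => conj (φ₂ q)) p), dzb (fun q => conj (φ₁ q)) p] := by
    ext i j
    fin_cases i <;> fin_cases j <;> simp [mD, spinMat]
  have hΨz : mD dz (fun q => spinMat ψ₁ ψ₂ q) p
      = !![dz ψ₁ p, -(dz (fun q => conj (ψ₂ q)) p);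
          dz ψ₂ p, dz (fun q => conj (ψ₁ q)) p] := by
    ext i j
    fin_cases i <;> fin_cases j <;> simp [mD, spinMat]
  have hΨzb : mD dzb (fun q => spinMat ψ₁ ψ₂ q) p
      = !![dzb ψ₁ p, -(dzb (fun q => conj (ψ₂ q)) p);
          dzb ψ₂ p, dzb (fun q => conj (ψ₁ q)) p] := by
    ext i j
    fin_cases i <;> fin_cases j <;> simp [mD, spinMat]
  rw [hTt, hAz, hAzb, hBz, hBzb, hΦz, hΦzb, hΨz, hΨzb]
  rw [Matrix.eta_fin_two ((S p)⁻¹)]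
  simp only [Mform, Nform, Qform, spinMat, Gam, DSIIAux.smul_lit, DSIIAux.tr_lit,
    DSIIAux.neg_lit, Matrix.mul_fin_two, DSIIAux.add_lit, DSIIAux.sub_lit, zero_mul,
    mul_zero, one_mul, mul_one, zero_add, add_zero, neg_neg, neg_mul, mul_neg, neg_zero]
  generalize (S p)⁻¹ 0 0 = t00
  generalize (S p)⁻¹ 0 1 = t01
  generalize (S p)⁻¹ 1 0 = t10
  generalize (S p)⁻¹ 1 1 = t11
  generalize dz (fun q => conj (ψ₁ q)) p = dzc0
  generalize dz (fun q => conj (ψ₂ q)) p = dzc1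
  generalize dz (fun q => conj (φ₁ q)) p = dzc2
  generalize dz (fun q => conj (φ₂ q)) p = dzc3
  generalize dzb (fun q => conj (ψ₁ q)) p = dbc0
  generalize dzb (fun q => conj (ψ₂ q)) p = dbc1
  generalize dzb (fun q => conj (φ₁ q)) p = dbc2
  generalize dzb (fun q => conj (φ₂ q)) p = dbc3
  generalize dz ψ₁ p = dzv0
  generalize dz ψ₂ p = dzv1
  generalize dz φ₁ p = dzv2
  generalize dz φ₂ p = dzv3
  generalize dzb ψ₁ p = dbv0
  generalize dzb ψ₂ p = dbv1
  generalize dzb φ₁ p = dbv2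
  generalize dzb φ₂ p = dbv3
  generalize conj (ψ₁ p) = c0
  generalize conj (ψ₂ p) = c1
  generalize conj (φ₁ p) = c2
  generalize conj (φ₂ p) = c3
  generalize ψ₁ p = v0
  generalize ψ₂ p = v1
  generalize φ₁ p = v2
  generalize φ₂ p = v3
  ext i j
  fin_cases i <;> fin_cases j <;>
    simp only [Matrix.cons_val', Matrix.cons_val_zero, Matrix.cons_val_one, Matrix.head_cons,
      Matrix.head_fin_const, Matrix.empty_val', Matrix.cons_val_fin_one] <;>
    ring_nf
end
end

section
/- Fix c ∈ ℂ with c ≠ 0, and set D(z) = |z|² + |z+c|², U(z,t) = −i·c/D(z), V(z,t) = −2(2z̄+c̄)²/D(z)². Then D(z) > 0 for every z ∈ ℂ, the functions U and V are smooth on ℂ×ℝ and independent of t, and (U,V) solves the DSII equation at every point of ℂ×ℝ. -/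
open Complex ComplexConjugate

noncomputable section

/-- The pair (U,V) satisfies the DSII equation at the point p. -/
def DSIIAt (U V : ℂ × ℝ → ℂ) (p : ℂ × ℝ) : Prop :=
  dt U p = Complex.I *
      (dz (dz U) p + dzb (dzb U) p + (V p + conj (V p)) * U p) ∧
  dzb V p = 2 * dz (fun q => U q * conj (U q)) p

namespace DSIIaux

/-- real-linear map v ↦ a*v + b*conj v -/
def Lmap (a b : ℂ) : ℂ →L[ℝ] ℂ :=
  a • (ContinuousLinearMap.id ℝ ℂ) + b • (Complex.conjCLE.toContinuousLinearMap)

@[simp] lemma Lmap_apply (a b v : ℂ) : Lmap a b v = a * v + b * conj v := by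
  simp [Lmap, smul_eq_mul]

lemma Lmap_ext {a b : ℂ} (L : ℂ →L[ℝ] ℂ)
    (h1 : L 1 = a + b) (hI : L Complex.I = a * Complex.I - b * Complex.I) :
    L = Lmap a b := by
  ext v
  have hv : (v : ℂ) = (v.re : ℝ) • (1 : ℂ) + (v.im : ℝ) • Complex.I := by
    rw [Complex.real_smul, Complex.real_smul, mul_one, Complex.re_add_im]
  have hcv : (starRingEnd ℂ) v = (v.re : ℂ) - v.im * Complex.I := by
    simp [Complex.ext_iff]
  calc L v = L ((v.re : ℝ) • (1 : ℂ) + (v.im : ℝ) • Complex.I) := by rw [← hv]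
    _ = (v.re : ℝ) • L 1 + (v.im : ℝ) • L Complex.I := by
        rw [map_add, map_smul, map_smul]
    _ = Lmap a b v := by
        rw [h1, hI, Lmap_apply, hcv, Complex.real_smul, Complex.real_smul]
        nth_rewrite 3 [← Complex.re_add_im v]
        ring

lemma hasFD_id (z : ℂ) : HasFDerivAt (fun w : ℂ => w) (Lmap 1 0) z := by
  have h := hasFDerivAt_id (𝕜 := ℝ) z
  have : (ContinuousLinearMap.id ℝ ℂ) = Lmap 1 0 := by
    apply Lmap_ext <;> simp
  rwa [this] at h

lemma hasFD_conj (z : ℂ) :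
    HasFDerivAt (fun w : ℂ => (conj w : ℂ)) (Lmap 0 1) z := by
  have h := Complex.conjCLE.hasFDerivAt (x := z)
  have : (Complex.conjCLE.toContinuousLinearMap : ℂ →L[ℝ] ℂ) = Lmap 0 1 := by
    apply Lmap_ext <;> simp
  exact this ▸ h

lemma hasFD_const (k z : ℂ) : HasFDerivAt (fun _ : ℂ => k) (Lmap 0 0) z := by
  have h := hasFDerivAt_const (𝕜 := ℝ) k z
  have : (0 : ℂ →L[ℝ] ℂ) = Lmap 0 0 := by apply Lmap_ext <;> simp
  exact this ▸ h

lemma hasFD_add {f g : ℂ → ℂ} {a b a' b' : ℂ} {z : ℂ}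
    (hf : HasFDerivAt f (Lmap a b) z) (hg : HasFDerivAt g (Lmap a' b') z) :
    HasFDerivAt (fun w => f w + g w) (Lmap (a + a') (b + b')) z := by
  have h := hf.add hg
  have : (Lmap a b + Lmap a' b') = Lmap (a + a') (b + b') := by
    apply Lmap_ext <;> simp <;> ring
  exact this ▸ h

lemma hasFD_mul {f g : ℂ → ℂ} {a b a' b' : ℂ} {z : ℂ}
    (hf : HasFDerivAt f (Lmap a b) z) (hg : HasFDerivAt g (Lmap a' b') z) :
    HasFDerivAt (fun w => f w * g w)
      (Lmap (a * g z + f z * a') (b * g z + f z * b')) z := by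
  have h := hf.mul hg
  have : (f z • Lmap a' b' + g z • Lmap a b)
      = Lmap (a * g z + f z * a') (b * g z + f z * b') := by
    apply Lmap_ext <;> simp [smul_eq_mul] <;> ring
  exact this ▸ h

lemma hasFD_inv {f : ℂ → ℂ} {a b : ℂ} {z : ℂ}
    (hf : HasFDerivAt f (Lmap a b) z) (hz : f z ≠ 0) :
    HasFDerivAt (fun w => (f w)⁻¹)
      (Lmap (-a / (f z) ^ 2) (-b / (f z) ^ 2)) z := by
  have hinv := (hasFDerivAt_inv (𝕜 := ℂ) hz).restrictScalars ℝ
  have h := hinv.comp z hf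
  have : (((ContinuousLinearMap.smulRight (1 : ℂ →L[ℂ] ℂ) (-(f z ^ 2)⁻¹) :
      ℂ →L[ℂ] ℂ).restrictScalars ℝ).comp (Lmap a b))
      = Lmap (-a / (f z) ^ 2) (-b / (f z) ^ 2) := by
    apply Lmap_ext <;> simp [smul_eq_mul] <;> ring
  exact this ▸ h

lemma hasFD_const_mul {f : ℂ → ℂ} {a b : ℂ} {z : ℂ} (k : ℂ)
    (hf : HasFDerivAt f (Lmap a b) z) :
    HasFDerivAt (fun w => k * f w) (Lmap (k * a) (k * b)) z := by
  have h := hasFD_mul (hasFD_const k z) hf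
  simpa using h

lemma hasFD_congr_L {f : ℂ → ℂ} {a b a' b' : ℂ} {z : ℂ}
    (hf : HasFDerivAt f (Lmap a b) z) (ha : a = a') (hb : b = b') :
    HasFDerivAt f (Lmap a' b') z := ha ▸ hb ▸ hf

/-- main transfer lemma to functions on ℂ × ℝ -/
lemma wirt {f : ℂ → ℂ} {a b : ℂ} (p : ℂ × ℝ)
    (hf : HasFDerivAt f (Lmap a b) p.1) :
    dz (fun q => f q.1) p = a ∧ dzb (fun q => f q.1) p = b ∧
      dt (fun q => f q.1) p = 0 := by
  have h : HasFDerivAt (fun q : ℂ × ℝ => f q.1)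
      ((Lmap a b).comp (ContinuousLinearMap.fst ℝ ℂ ℝ)) p :=
    hf.comp p hasFDerivAt_fst
  have hd := h.fderiv
  refine ⟨?_, ?_, ?_⟩ <;>
    simp [dz, dzb, dt, hd, Complex.ext_iff] <;> constructor <;> ring



/-- the squared-norm sum as a complex polynomial in z, conj z -/
def ee (c : ℂ) : ℂ → ℂ := fun z => z * conj z + (z + c) * (conj z + conj c)

lemma hasFD_ee (c z : ℂ) :
    HasFDerivAt (ee c) (Lmap (2 * conj z + conj c) (2 * z + c)) z := by
  have h1 := hasFD_mul (hasFD_id z) (hasFD_conj z)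
  have h2 := hasFD_mul (hasFD_add (hasFD_id z) (hasFD_const c z))
    (hasFD_add (hasFD_conj z) (hasFD_const (conj c) z))
  exact hasFD_congr_L (hasFD_add h1 h2) (by ring) (by ring)

lemma hasFD_A (c z : ℂ) :
    HasFDerivAt (fun w : ℂ => 2 * conj w + conj c) (Lmap 0 2) z := by
  have h := hasFD_add (hasFD_const_mul 2 (hasFD_conj z)) (hasFD_const (conj c) z)
  exact hasFD_congr_L h (by ring) (by ring)

lemma contDiff_conj' : ContDiff ℝ (⊤ : ℕ∞) (fun z : ℂ => (conj z : ℂ)) := by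
  have h := Complex.conjCLE.toContinuousLinearMap.contDiff (𝕜 := ℝ) (n := (⊤ : ℕ∞))
  have heq : (fun z : ℂ => (conj z : ℂ)) = ⇑Complex.conjCLE.toContinuousLinearMap := by
    funext z; simp
  rw [heq]
  exact h

lemma contDiff_ee (c : ℂ) : ContDiff ℝ (⊤ : ℕ∞) (fun q : ℂ × ℝ => ee c q.1) := by
  unfold ee
  exact ((contDiff_id.mul contDiff_conj').add
    ((contDiff_id.add contDiff_const).mul
      (contDiff_conj'.add contDiff_const))).comp contDiff_fst

lemma hasFD_B (c z : ℂ) :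
    HasFDerivAt (fun w : ℂ => 2 * w + c) (Lmap 2 0) z := by
  have h := hasFD_add (hasFD_const_mul 2 (hasFD_id z)) (hasFD_const c z)
  exact hasFD_congr_L h (by ring) (by ring)

end DSIIaux

open DSIIaux in
/-- The stationary solution from f = z + c (case n = 0). -/
theorem stationary_solution_n0
    (c : ℂ) (hc : c ≠ 0)
    (D : ℂ → ℝ) (hD : ∀ z, D z = Complex.normSq z + Complex.normSq (z + c))
    (U V : ℂ × ℝ → ℂ)
    (hUdef : ∀ p, U p = -Complex.I * c / (D p.1 : ℂ))
    (hVdef : ∀ p, V p = -2 * (2 * conj p.1 + conj c) ^ 2 / (D p.1 : ℂ) ^ 2) :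
    (∀ z, 0 < D z) ∧
    ContDiff ℝ (⊤ : ℕ∞) U ∧ ContDiff ℝ (⊤ : ℕ∞) V ∧
    (∀ z : ℂ, ∀ t t' : ℝ, U (z, t) = U (z, t') ∧ V (z, t) = V (z, t')) ∧
    (∀ p : ℂ × ℝ, DSIIAt U V p) := by
  have hpos : ∀ z, 0 < D z := by
    intro z
    rw [hD]
    rcases eq_or_ne z 0 with rfl | hz
    · simpa using Complex.normSq_pos.mpr hc
    · have h1 := Complex.normSq_pos.mpr hz
      have h2 := Complex.normSq_nonneg (z + c)
      linarith
  have hne : ∀ z : ℂ, (D z : ℂ) ≠ 0 := fun z => by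
    exact_mod_cast (hpos z).ne'
  have hEz : ∀ z, (D z : ℂ) = ee c z := by
    intro z
    rw [hD]
    push_cast
    rw [← Complex.mul_conj, ← Complex.mul_conj]
    simp [ee, map_add]
  have hEne : ∀ z, ee c z ≠ 0 := fun z => (hEz z) ▸ hne z
  have hconjE : ∀ z, conj (ee c z) = ee c z := fun z => by
    rw [← hEz, Complex.conj_ofReal]
  -- functional forms
  have hU : U = fun q => -Complex.I * c * (ee c q.1)⁻¹ := by
    funext q; rw [hUdef, hEz, div_eq_mul_inv]
  have hV : V = fun q => (-2 : ℂ) *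
      (((2 * conj q.1 + conj c) * (2 * conj q.1 + conj c)) *
        ((ee c q.1) * (ee c q.1))⁻¹) := by
    funext q; rw [hVdef, hEz]; ring
  -- smoothness
  have hEcd := contDiff_ee c
  have hUsm : ContDiff ℝ (⊤ : ℕ∞) U := by
    rw [hU]
    exact contDiff_const.mul (hEcd.inv fun q => hEne q.1)
  have hVsm : ContDiff ℝ (⊤ : ℕ∞) V := by
    rw [hV]
    have hA : ContDiff ℝ (⊤ : ℕ∞) (fun q : ℂ × ℝ => 2 * conj q.1 + conj c) :=
      ((contDiff_const.mul contDiff_conj').add contDiff_const).comp contDiff_fst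
    exact contDiff_const.mul ((hA.mul hA).mul
      ((hEcd.mul hEcd).inv fun q => mul_ne_zero (hEne q.1) (hEne q.1)))
  refine ⟨hpos, hUsm, hVsm, fun z t t' => by constructor <;> simp [hUdef, hVdef], ?_⟩
  -- derivative computations
  have hu : ∀ z : ℂ, HasFDerivAt (fun w => -Complex.I * c * (ee c w)⁻¹)
      (Lmap (Complex.I * c * ((2 * conj z + conj c) * ((ee c z) * (ee c z))⁻¹))
            (Complex.I * c * ((2 * z + c) * ((ee c z) * (ee c z))⁻¹))) z := by
    intro z
    have h := hasFD_const_mul (-Complex.I * c) (hasFD_inv (hasFD_ee c z) (hEne z))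
    exact hasFD_congr_L h (by ring) (by ring)
  have hdzU : dz U = fun q => Complex.I * c *
      ((2 * conj q.1 + conj c) * ((ee c q.1) * (ee c q.1))⁻¹) := by
    funext q; rw [hU]; exact (wirt q (hu q.1)).1
  have hdzbU : dzb U = fun q => Complex.I * c *
      ((2 * q.1 + c) * ((ee c q.1) * (ee c q.1))⁻¹) := by
    funext q; rw [hU]; exact (wirt q (hu q.1)).2.1
  have hW : (fun q => U q * conj (U q)) = fun q =>
      c * conj c * ((ee c q.1) * (ee c q.1))⁻¹ := by
    funext q
    rw [hUdef]
    rw [map_div₀]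
    rw [Complex.conj_ofReal, hEz]
    have h := hEne q.1
    field_simp
    ring_nf
    simp [Complex.I_sq]
    rw [← mul_assoc, Complex.I_mul_I]; ring
  intro p
  have hEp := hEne p.1
  -- second-level derivative facts
  have hiE2 := hasFD_inv (hasFD_mul (hasFD_ee c p.1) (hasFD_ee c p.1))
    (mul_ne_zero hEp hEp)
  have hg1 := hasFD_const_mul (Complex.I * c) (hasFD_mul (hasFD_A c p.1) hiE2)
  have hg2 := hasFD_const_mul (Complex.I * c) (hasFD_mul (hasFD_B c p.1) hiE2)
  have hvf := hasFD_const_mul (-2 : ℂ)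
    (hasFD_mul (hasFD_mul (hasFD_A c p.1) (hasFD_A c p.1)) hiE2)
  have hwf := hasFD_const_mul (c * conj c) hiE2
  have hdzdzU := (wirt p hg1).1
  rw [← hdzU] at hdzdzU
  have hdzbdzbU := (wirt p hg2).2.1
  rw [← hdzbU] at hdzbdzbU
  have hdzbV := (wirt p hvf).2.1
  rw [← hV] at hdzbV
  have hdzW := (wirt p hwf).1
  rw [← hW] at hdzW
  have hdtU : dt U p = 0 := by rw [hU]; exact (wirt p (hu p.1)).2.2
  constructor
  · rw [hdtU, hdzdzU, hdzbdzbU, hUdef, hVdef, hEz]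
    rw [show conj ((-2 : ℂ) * (2 * conj p.1 + conj c) ^ 2 / (ee c p.1) ^ 2)
        = (-2 : ℂ) * (2 * p.1 + c) ^ 2 / (ee c p.1) ^ 2 by
      simp only [map_div₀, map_mul, map_pow, map_add, map_neg, map_ofNat,
        Complex.conj_conj, hconjE]]
    field_simp
    ring
  · rw [hdzbV, hdzW]
    field_simp
    simp only [ee]
    ring
end
end

section
/- Fix c ∈ ℂ and set f(z,t) = z² + 2it + c, D(z,t) = |z|² + |f(z,t)|², U(z,t) = i(z² − 2it − c)/D, and V(z,t) = 4(z̄² − 2it + c̄)/D − 2(2z(z̄² − 2it + c̄) + z̄)²/D². Then at every point (z,t) with D(z,t) ≠ 0 the pair (U,V) satisfies the DSII equation. -/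
open Complex ComplexConjugate

noncomputable section

/-!
Write `F = z² + 2it + c` and `G = F̄ = z̄² − 2it + c̄`, so that `D = z z̄ + F G`,
`U = i (2z² − F) / D` and `V = 4G/D − 2(2zG + z̄)²/D²`. Every function in sight is a rational
function of `z, z̄, F, G` whose Wirtinger and time derivatives follow from
`F_z = 2z`, `F_z̄ = 0`, `F_t = 2i` and the conjugate rules for `G`. We compute these
derivatives with the product and quotient rules on the open set `{D ≠ 0}`, where the first
derivatives of `U` agree with closed forms and can be differentiated again; both DSII
equations then become identities between rational functions of `z, z̄, F, G` with
denominator a power of `D`.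
-/

section WirtingerCalculus

/-- The `ℝ`-linear map `v ↦ a v₁ + b v̄₁ + τ v₂`: the differential with `∂_z = a`, `∂_z̄ = b`,
`∂_t = τ`. -/
def wirtingerCLM (a b τ : ℂ) : ℂ × ℝ →L[ℝ] ℂ :=
  a • ContinuousLinearMap.fst ℝ ℂ ℝ
    + b • (conjCLE.toContinuousLinearMap ∘L ContinuousLinearMap.fst ℝ ℂ ℝ)
    + τ • (ofRealCLM ∘L ContinuousLinearMap.snd ℝ ℂ ℝ)

@[simp]
lemma wirtingerCLM_apply (a b τ : ℂ) (v : ℂ × ℝ) :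
    wirtingerCLM a b τ v = a * v.1 + b * conj v.1 + τ * v.2 := by
  simp [wirtingerCLM]

def HasWirtingerDerivOn (g gz gzb gt : ℂ × ℝ → ℂ) (s : Set (ℂ × ℝ)) : Prop :=
  ∀ q ∈ s, HasFDerivAt g (wirtingerCLM (gz q) (gzb q) (gt q)) q

variable {g h gz gzb gt hz hzb ht : ℂ × ℝ → ℂ} {s : Set (ℂ × ℝ)} {q : ℂ × ℝ}

lemma hasWirtingerDerivOn_const (a : ℂ) :
    HasWirtingerDerivOn (fun _ => a) 0 0 0 s := fun q _ =>
  (hasFDerivAt_const a q).congr_fderiv (by ext <;> simp)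

lemma hasWirtingerDerivOn_fst :
    HasWirtingerDerivOn (fun q => q.1) 1 0 0 s := fun q _ =>
  hasFDerivAt_fst.congr_fderiv (by ext <;> simp)

lemma hasWirtingerDerivOn_conj_fst :
    HasWirtingerDerivOn (fun q => conj q.1) 0 1 0 s := fun q _ =>
  (conjCLE.toContinuousLinearMap.hasFDerivAt.comp q hasFDerivAt_fst).congr_fderiv
    (by ext <;> simp)

lemma hasWirtingerDerivOn_ofReal_snd :
    HasWirtingerDerivOn (fun q => (q.2 : ℂ)) 0 0 1 s := fun q _ =>
  (ofRealCLM.hasFDerivAt.comp q hasFDerivAt_snd).congr_fderiv (by ext <;> simp)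

namespace HasWirtingerDerivOn

lemma dz_eq (hg : HasWirtingerDerivOn g gz gzb gt s) (hq : q ∈ s) : dz g q = gz q := by
  simp [dz, (hg q hq).fderiv]
  linear_combination (gzb q - gz q) / 2 * I_mul_I

lemma dzb_eq (hg : HasWirtingerDerivOn g gz gzb gt s) (hq : q ∈ s) : dzb g q = gzb q := by
  simp [dzb, (hg q hq).fderiv]
  linear_combination (gz q - gzb q) / 2 * I_mul_I

lemma dt_eq (hg : HasWirtingerDerivOn g gz gzb gt s) (hq : q ∈ s) : dt g q = gt q := by
  simp [dt, (hg q hq).fderiv]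

lemma congr_deriv {gz' gzb' gt' : ℂ × ℝ → ℂ} (hg : HasWirtingerDerivOn g gz gzb gt s)
    (hz : ∀ q, gz q = gz' q) (hzb : ∀ q, gzb q = gzb' q) (ht : ∀ q, gt q = gt' q) :
    HasWirtingerDerivOn g gz' gzb' gt' s :=
  funext hz ▸ funext hzb ▸ funext ht ▸ hg

lemma dz_dz_eq {gzz gzzb gzt : ℂ × ℝ → ℂ} (hs : IsOpen s) (hg : HasWirtingerDerivOn g gz gzb gt s)
    (hgz : HasWirtingerDerivOn gz gzz gzzb gzt s) (hq : q ∈ s) : dz (dz g) q = gzz q := by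
  have hloc : dz g =ᶠ[nhds q] gz :=
    Filter.eventuallyEq_of_mem (hs.mem_nhds hq) fun _ hr => hg.dz_eq hr
  rw [← hgz.dz_eq hq]
  simp only [dz, hloc.fderiv_eq]

lemma dzb_dzb_eq {gzbz gzbzb gzbt : ℂ × ℝ → ℂ} (hs : IsOpen s)
    (hg : HasWirtingerDerivOn g gz gzb gt s) (hgzb : HasWirtingerDerivOn gzb gzbz gzbzb gzbt s)
    (hq : q ∈ s) : dzb (dzb g) q = gzbzb q := by
  have hloc : dzb g =ᶠ[nhds q] gzb :=
    Filter.eventuallyEq_of_mem (hs.mem_nhds hq) fun _ hr => hg.dzb_eq hr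
  rw [← hgzb.dzb_eq hq]
  simp only [dzb, hloc.fderiv_eq]

lemma add (hg : HasWirtingerDerivOn g gz gzb gt s) (hh : HasWirtingerDerivOn h hz hzb ht s) :
    HasWirtingerDerivOn (fun q => g q + h q) (fun q => gz q + hz q) (fun q => gzb q + hzb q)
      (fun q => gt q + ht q) s := fun q hq =>
  ((hg q hq).add (hh q hq)).congr_fderiv (by ext <;> simp; ring)

lemma sub (hg : HasWirtingerDerivOn g gz gzb gt s) (hh : HasWirtingerDerivOn h hz hzb ht s) :
    HasWirtingerDerivOn (fun q => g q - h q) (fun q => gz q - hz q) (fun q => gzb q - hzb q)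
      (fun q => gt q - ht q) s := fun q hq =>
  ((hg q hq).sub (hh q hq)).congr_fderiv (by ext <;> simp; ring)

lemma mul (hg : HasWirtingerDerivOn g gz gzb gt s) (hh : HasWirtingerDerivOn h hz hzb ht s) :
    HasWirtingerDerivOn (fun q => g q * h q) (fun q => gz q * h q + g q * hz q)
      (fun q => gzb q * h q + g q * hzb q) (fun q => gt q * h q + g q * ht q) s := fun q hq =>
  ((hg q hq).mul (hh q hq)).congr_fderiv (by ext <;> simp <;> ring)

lemma const_mul (a : ℂ) (hg : HasWirtingerDerivOn g gz gzb gt s) :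
    HasWirtingerDerivOn (fun q => a * g q) (fun q => a * gz q) (fun q => a * gzb q)
      (fun q => a * gt q) s := fun q hq =>
  ((hg q hq).const_mul a).congr_fderiv (by ext <;> simp; ring)

lemma sq (hg : HasWirtingerDerivOn g gz gzb gt s) :
    HasWirtingerDerivOn (fun q => g q ^ 2) (fun q => 2 * g q * gz q)
      (fun q => 2 * g q * gzb q) (fun q => 2 * g q * gt q) s := fun q hq =>
  ((hg q hq).pow 2).congr_fderiv (by ext <;> simp; ring)

lemma div (hg : HasWirtingerDerivOn g gz gzb gt s) (hh : HasWirtingerDerivOn h hz hzb ht s)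
    (hne : ∀ q ∈ s, h q ≠ 0) :
    HasWirtingerDerivOn (fun q => g q / h q) (fun q => (gz q * h q - g q * hz q) / h q ^ 2)
      (fun q => (gzb q * h q - g q * hzb q) / h q ^ 2)
      (fun q => (gt q * h q - g q * ht q) / h q ^ 2) s := fun q hq => by
  have hinv := (hasFDerivAt_inv' (𝕜 := ℝ) (hne q hq)).comp q (hh q hq)
  refine ((hg q hq).mul hinv).congr_fderiv ?_
  have hhq := hne q hq
  ext <;> simp <;> field_simp <;> ring

end HasWirtingerDerivOn

end WirtingerCalculus

namespace DSIISolution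

variable (c : ℂ)

def F : ℂ × ℝ → ℂ := fun q => q.1 ^ 2 + 2 * I * q.2 + c

def G : ℂ × ℝ → ℂ := fun q => conj q.1 ^ 2 - 2 * I * q.2 + conj c

def D : ℂ × ℝ → ℂ := fun q => q.1 * conj q.1 + F c q * G c q

def N : ℂ × ℝ → ℂ := fun q => 2 * q.1 ^ 2 - F c q

def U : ℂ × ℝ → ℂ := fun q => I * N c q / D c q

def V : ℂ × ℝ → ℂ := fun q =>
  4 * G c q / D c q - 2 * (2 * q.1 * G c q + conj q.1) ^ 2 / D c q ^ 2

def Uz : ℂ × ℝ → ℂ := fun q =>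
  I * (2 * q.1 * D c q - N c q * (conj q.1 + 2 * q.1 * G c q)) / D c q ^ 2

def Uzb : ℂ × ℝ → ℂ := fun q =>
  -I * N c q * (q.1 + 2 * conj q.1 * F c q) / D c q ^ 2

variable {c} {s : Set (ℂ × ℝ)}

lemma hasWirtingerDerivOn_F :
    HasWirtingerDerivOn (F c) (fun q => 2 * q.1) 0 (fun _ => 2 * I) s :=
  ((hasWirtingerDerivOn_fst.sq.add
    (hasWirtingerDerivOn_ofReal_snd.const_mul (2 * I))).add
      (hasWirtingerDerivOn_const c)).congr_deriv (fun q => by simp) (fun q => by simp)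
        (fun q => by simp)

lemma hasWirtingerDerivOn_G :
    HasWirtingerDerivOn (G c) 0 (fun q => 2 * conj q.1) (fun _ => -2 * I) s :=
  ((hasWirtingerDerivOn_conj_fst.sq.sub
    (hasWirtingerDerivOn_ofReal_snd.const_mul (2 * I))).add
      (hasWirtingerDerivOn_const (conj c))).congr_deriv (fun q => by simp) (fun q => by simp)
        (fun q => by simp)

lemma hasWirtingerDerivOn_D :
    HasWirtingerDerivOn (D c) (fun q => conj q.1 + 2 * q.1 * G c q)
      (fun q => q.1 + 2 * conj q.1 * F c q) (fun q => 2 * I * (G c q - F c q)) s :=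
  ((hasWirtingerDerivOn_fst.mul hasWirtingerDerivOn_conj_fst).add
    (hasWirtingerDerivOn_F.mul hasWirtingerDerivOn_G)).congr_deriv (fun q => by simp)
      (fun q => by simp; ring) (fun q => by simp; ring)

lemma hasWirtingerDerivOn_N :
    HasWirtingerDerivOn (N c) (fun q => 2 * q.1) 0 (fun _ => -2 * I) s :=
  ((hasWirtingerDerivOn_fst.sq.const_mul 2).sub hasWirtingerDerivOn_F).congr_deriv
    (fun q => by simp; ring) (fun q => by simp) (fun q => by simp)

lemma isOpen_D_ne_zero : IsOpen {q | D c q ≠ 0} := by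
  refine isOpen_ne_fun ?_ continuous_const
  unfold D F G
  fun_prop

lemma hasWirtingerDerivOn_U :
    HasWirtingerDerivOn (U c) (Uz c) (Uzb c)
      (fun q => I * (-2 * I * D c q - N c q * (2 * I * (G c q - F c q)))
        / D c q ^ 2) {q | D c q ≠ 0} :=
  ((hasWirtingerDerivOn_N.const_mul I).div hasWirtingerDerivOn_D fun _ hq => hq).congr_deriv
    (fun q => by simp [Uz]; ring) (fun q => by simp [Uzb]) (fun q => by ring)

lemma conj_F (q : ℂ × ℝ) : conj (F c q) = G c q := by
  simp [F, G, map_ofNat]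
  ring

lemma conj_G (q : ℂ × ℝ) : conj (G c q) = F c q := by
  rw [← conj_F, conj_conj]

lemma conj_D (q : ℂ × ℝ) : conj (D c q) = D c q := by
  simp only [D, map_add, map_mul, conj_F, conj_G, conj_conj]
  ring

lemma conj_V (q : ℂ × ℝ) :
    conj (V c q) = 4 * F c q / D c q - 2 * (2 * conj q.1 * F c q + q.1) ^ 2 / D c q ^ 2 := by
  simp [V, conj_G, conj_D, map_ofNat]

lemma dt_U_eq {p : ℂ × ℝ} (hp : D c p ≠ 0) :
    dt (U c) p = I * (dz (dz (U c)) p + dzb (dzb (U c)) p + (V c p + conj (V c p)) * U c p) := by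
  have hUz : HasWirtingerDerivOn (Uz c) _ _ _ {q | D c q ≠ 0} :=
    ((((hasWirtingerDerivOn_fst.const_mul 2).mul hasWirtingerDerivOn_D).sub
      (hasWirtingerDerivOn_N.mul (hasWirtingerDerivOn_conj_fst.add
        ((hasWirtingerDerivOn_fst.const_mul 2).mul hasWirtingerDerivOn_G)))).const_mul I).div
      hasWirtingerDerivOn_D.sq fun _ hq => pow_ne_zero 2 hq
  have hUzb : HasWirtingerDerivOn (Uzb c) _ _ _ {q | D c q ≠ 0} :=
    ((hasWirtingerDerivOn_N.const_mul (-I)).mul (hasWirtingerDerivOn_fst.add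
        ((hasWirtingerDerivOn_conj_fst.const_mul 2).mul hasWirtingerDerivOn_F))).div
      hasWirtingerDerivOn_D.sq fun _ hq => pow_ne_zero 2 hq
  rw [hasWirtingerDerivOn_U.dt_eq hp, hasWirtingerDerivOn_U.dz_dz_eq isOpen_D_ne_zero hUz hp,
    hasWirtingerDerivOn_U.dzb_dzb_eq isOpen_D_ne_zero hUzb hp, conj_V]
  simp only [Pi.zero_apply, Pi.one_apply, U, V, N, D] at hp ⊢
  field_simp
  ring

lemma U_mul_conj_U (q : ℂ × ℝ) :
    U c q * conj (U c q) = N c q * (2 * conj q.1 ^ 2 - G c q) / D c q ^ 2 := by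
  have hconj : conj (U c q) = -I * (2 * conj q.1 ^ 2 - G c q) / D c q := by
    simp [U, N, conj_F, conj_D, map_ofNat]
  rw [hconj, U]
  ring_nf
  rw [I_sq]
  ring

lemma dzb_V_eq {p : ℂ × ℝ} (hp : D c p ≠ 0) :
    dzb (V c) p = 2 * dz (fun q => U c q * conj (U c q)) p := by
  have hV : HasWirtingerDerivOn (V c) _ _ _ {q | D c q ≠ 0} :=
    ((hasWirtingerDerivOn_G.const_mul 4).div hasWirtingerDerivOn_D fun _ hq => hq).sub
      (((((hasWirtingerDerivOn_fst.const_mul 2).mul hasWirtingerDerivOn_G).add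
        hasWirtingerDerivOn_conj_fst).sq.const_mul 2).div hasWirtingerDerivOn_D.sq
          fun _ hq => pow_ne_zero 2 hq)
  have hUU : HasWirtingerDerivOn
      (fun q => N c q * (2 * conj q.1 ^ 2 - G c q) / D c q ^ 2) _ _ _
      {q | D c q ≠ 0} :=
    (hasWirtingerDerivOn_N.mul ((hasWirtingerDerivOn_conj_fst.sq.const_mul 2).sub
      hasWirtingerDerivOn_G)).div hasWirtingerDerivOn_D.sq fun _ hq => pow_ne_zero 2 hq
  rw [funext U_mul_conj_U, hV.dzb_eq hp, hUU.dz_eq hp]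
  simp only [Pi.zero_apply, Pi.one_apply, N, D] at hp ⊢
  field_simp
  ring

lemma dsiiAt {p : ℂ × ℝ} (hp : D c p ≠ 0) : DSIIAt (U c) (V c) p :=
  ⟨dt_U_eq hp, dzb_V_eq hp⟩

end DSIISolution

/-- The solution from f = z² + 2it + c (case n = 1). -/
theorem solution_n1
    (c : ℂ)
    (f D U V : ℂ × ℝ → ℂ)
    (hf : ∀ p, f p = p.1 ^ 2 + 2 * Complex.I * (p.2 : ℂ) + c)
    (hD : ∀ p, D p = (Complex.normSq p.1 : ℂ) + (Complex.normSq (f p) : ℂ))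
    (hUdef : ∀ p, U p = Complex.I * (p.1 ^ 2 - 2 * Complex.I * (p.2 : ℂ) - c) / D p)
    (hVdef : ∀ p, V p =
      4 * (conj p.1 ^ 2 - 2 * Complex.I * (p.2 : ℂ) + conj c) / D p
        - 2 * (2 * p.1 * (conj p.1 ^ 2 - 2 * Complex.I * (p.2 : ℂ) + conj c) + conj p.1) ^ 2
            / D p ^ 2) :
    ∀ p : ℂ × ℝ, D p ≠ 0 → DSIIAt U V p := by
  have hDeq : D = DSIISolution.D c := funext fun q => by
    have hfq : f q = DSIISolution.F c q := hf q
    rw [hD, ← mul_conj, ← mul_conj, hfq, DSIISolution.conj_F, DSIISolution.D]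
  have hUeq : U = DSIISolution.U c := funext fun q => by
    rw [hUdef, hDeq, DSIISolution.U, DSIISolution.N, DSIISolution.F]
    ring
  have hVeq : V = DSIISolution.V c := funext fun q => by
    rw [hVdef, hDeq]
    rfl
  intro p hp
  rw [hDeq] at hp
  rw [hUeq, hVeq]
  exact DSIISolution.dsiiAt hp

end
end

section
/- Fix c ∈ ℂ and t ∈ ℝ, and set U(z,t) = i(z² − 2it − c)/(|z|² + |z² + 2it + c|²) (defined wherever the denominator is nonzero). Then the function z ↦ U(z,t) is square-integrable over ℂ ≅ ℝ² with respect to Lebesgue measure: ∫_{ℝ²} |U(z,t)|² dx dy < ∞. -/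
/-!
With `a = 2it + c`, the numerator is `z² - a` and the denominator is `|z|² + |z² + a|²`.
The numerator is at most `|z|² + |a|`, the denominator at least `|z|² + (|z|² - |a|)²`,
so `|U(z,t)| ≤ C (1 + |z|)⁻²` with `C` depending only on `|a|`. Hence `|U|²` decays like
`(1 + |z|)⁻⁴`, which is integrable on the plane because `4 > 2`.
-/

open Complex MeasureTheory Module

section Decay

variable {E F : Type*} [NormedAddCommGroup E] [NormedSpace ℝ E] [FiniteDimensional ℝ E]
  [MeasurableSpace E] [BorelSpace E] [NormedAddCommGroup F] {μ : Measure E} [μ.IsAddHaarMeasure]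

theorem integrable_of_norm_mul_one_add_norm_rpow_le {f : E → F} {r C : ℝ}
    (hr : (finrank ℝ E : ℝ) < r) (hf : AEStronglyMeasurable f μ)
    (h : ∀ x, ‖f x‖ * (1 + ‖x‖) ^ r ≤ C) : Integrable f μ := by
  refine ((integrable_one_add_norm hr).const_mul C).mono' hf (ae_of_all _ fun x => ?_)
  rw [Real.rpow_neg (by positivity), ← div_eq_mul_inv, le_div_iff₀ (by positivity)]
  exact h x

end Decay

/-- The constant is `≥ 1/b` because the bound must hold at `u = 0`; for `b = 0` the junk
value `2 / 0 = 0` leaves `6`, which still works. -/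
theorem two_mul_add_mul_one_add_le {u b : ℝ} (hu : 0 ≤ u) (hb : 0 ≤ b) :
    2 * (u + b) * (1 + u) ≤ (6 * (1 + b) + 2 / b) * (u + (u - b) ^ 2) := by
  rcases hb.eq_or_lt with rfl | hb
  · simp only [add_zero, sub_zero, div_zero]
    nlinarith [sq_nonneg u]
  rw [show 6 * (1 + b) + 2 / b = (6 * (1 + b) * b + 2) / b by field_simp,
    div_mul_eq_mul_div, le_div_iff₀ hb]
  nlinarith [sq_nonneg (u - b), sq_nonneg (b * u - b), mul_nonneg hu hb.le,
    mul_nonneg (mul_nonneg hu hu) hb.le, mul_nonneg (mul_nonneg hb.le hb.le) hb.le]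

theorem sq_add_mul_one_add_sq_le (s : ℝ) {b : ℝ} (hb : 0 ≤ b) :
    (s ^ 2 + b) * (1 + s) ^ 2 ≤ (6 * (1 + b) + 2 / b) * (s ^ 2 + (s ^ 2 - b) ^ 2) :=
  calc (s ^ 2 + b) * (1 + s) ^ 2 ≤ (s ^ 2 + b) * (2 * (1 + s ^ 2)) := by
        gcongr
        nlinarith [sq_nonneg (1 - s)]
    _ = 2 * (s ^ 2 + b) * (1 + s ^ 2) := by ring
    _ ≤ _ := two_mul_add_mul_one_add_le (sq_nonneg s) hb

section NormedDivisionRing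

variable {𝕜 : Type*} [NormedDivisionRing 𝕜]

theorem norm_sq_sub_le (z a : 𝕜) : ‖z ^ 2 - a‖ ≤ ‖z‖ ^ 2 + ‖a‖ :=
  norm_pow z 2 ▸ norm_sub_le (z ^ 2) a

theorem sq_norm_sq_sub_norm_le_sq_norm_sq_add (z a : 𝕜) :
    (‖z‖ ^ 2 - ‖a‖) ^ 2 ≤ ‖z ^ 2 + a‖ ^ 2 := by
  have h := abs_norm_sub_norm_le (z ^ 2) (-a)
  rw [norm_pow, norm_neg, sub_neg_eq_add] at h
  rw [← sq_abs (‖z‖ ^ 2 - ‖a‖)]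
  gcongr

theorem norm_sq_sub_div_mul_one_add_norm_sq_le (z a : 𝕜) :
    ‖z ^ 2 - a‖ / (‖z‖ ^ 2 + ‖z ^ 2 + a‖ ^ 2) * (1 + ‖z‖) ^ 2 ≤
      6 * (1 + ‖a‖) + 2 / ‖a‖ := by
  have hC : 0 ≤ 6 * (1 + ‖a‖) + 2 / ‖a‖ := by positivity
  rcases (show 0 ≤ ‖z‖ ^ 2 + ‖z ^ 2 + a‖ ^ 2 by positivity).eq_or_lt with hd | hd
  · rwa [← hd, div_zero, zero_mul]
  rw [div_mul_eq_mul_div, div_le_iff₀ hd]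
  calc ‖z ^ 2 - a‖ * (1 + ‖z‖) ^ 2 ≤ (‖z‖ ^ 2 + ‖a‖) * (1 + ‖z‖) ^ 2 := by
        gcongr
        exact norm_sq_sub_le z a
    _ ≤ (6 * (1 + ‖a‖) + 2 / ‖a‖) * (‖z‖ ^ 2 + (‖z‖ ^ 2 - ‖a‖) ^ 2) :=
        sq_add_mul_one_add_sq_le _ (norm_nonneg a)
    _ ≤ (6 * (1 + ‖a‖) + 2 / ‖a‖) * (‖z‖ ^ 2 + ‖z ^ 2 + a‖ ^ 2) := by
        gcongr _ * (_ + ?_)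
        exact sq_norm_sq_sub_norm_le_sq_norm_sq_add z a

end NormedDivisionRing

/-- The solution U(·,t) from f = z² + 2it + c is square-integrable on ℂ ≅ ℝ². -/
theorem square_integrable_n1 (c : ℂ) (t : ℝ) :
    Integrable (fun z : ℂ =>
      ‖Complex.I * (z ^ 2 - 2 * Complex.I * (t : ℂ) - c) /
        ((Complex.normSq z + Complex.normSq (z ^ 2 + 2 * Complex.I * (t : ℂ) + c) : ℝ) : ℂ)‖ ^ 2)
      volume := by
  set a : ℂ := 2 * I * t + c
  have hU (z : ℂ) :
      ‖I * (z ^ 2 - 2 * I * t - c) / ((normSq z + normSq (z ^ 2 + 2 * I * t + c) : ℝ) : ℂ)‖ =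
        ‖z ^ 2 - a‖ / (‖z‖ ^ 2 + ‖z ^ 2 + a‖ ^ 2) := by
    rw [normSq_eq_norm_sq, normSq_eq_norm_sq, norm_div, norm_mul, norm_I, one_mul, norm_real,
      Real.norm_of_nonneg (by positivity), sub_sub, add_assoc]
  refine integrable_of_norm_mul_one_add_norm_rpow_le (r := 4) (C := (6 * (1 + ‖a‖) + 2 / ‖a‖) ^ 2)
    (by norm_num [finrank_real_complex]) (by fun_prop : Measurable _).aestronglyMeasurable fun z => ?_
  rw [norm_pow, norm_norm, hU, show (4 : ℝ) = (2 * 2 : ℕ) by norm_num, Real.rpow_natCast,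
    pow_mul, ← mul_pow]
  exact pow_le_pow_left₀ (by positivity) (norm_sq_sub_div_mul_one_add_norm_sq_le z a) 2
end

section
/- Fix T ∈ ℝ and set U(z,t) = i(z² − 2it + iT)/(|z|² + |z² + 2it − iT|²). Then for every t ≠ T/2 the denominator |z|² + |z² + 2it − iT|² is strictly positive for all z ∈ ℂ (so U(·,t) is smooth on ℂ), and ∫_{ℝ²} |U(z,t)|² dx dy = 2π. -/
open Complex MeasureTheory Set

noncomputable section WillmoreAux

/-- The degree two rational map `z ↦ z + c/z`. -/
private def phiW (c : ℂ) (z : ℂ) : ℂ := z + c * z⁻¹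

/-- Its real Fréchet derivative. -/
private def FmapW (c : ℂ) (z : ℂ) : ℂ →L[ℝ] ℂ :=
  ((1 : ℂ →L[ℂ] ℂ).smulRight (1 - c * (z^2)⁻¹)).restrictScalars ℝ

/-- The Fubini–Study density. -/
private def fsdW (w : ℂ) : ℝ := ((1 + Complex.normSq w)^2)⁻¹

/-- The Willmore integrand. -/
private def hfunW (c : ℂ) (z : ℂ) : ℝ :=
  Complex.normSq (z^2 - c) / (Complex.normSq z + Complex.normSq (z^2 + c))^2

private lemma det_FmapW (c : ℂ) (z : ℂ) :
    (FmapW c z).det = Complex.normSq (1 - c * (z^2)⁻¹) := by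
  set d : ℂ := 1 - c * (z^2)⁻¹
  have h : (((((1 : ℂ →L[ℂ] ℂ).smulRight d).restrictScalars ℝ)) : ℂ →ₗ[ℝ] ℂ)
      = Algebra.lmul ℝ ℂ d := by
    apply LinearMap.ext
    intro w
    simp [mul_comm]
  rw [FmapW, ContinuousLinearMap.det, h, ← Algebra.norm_apply, Algebra.norm_complex_apply]

private lemma radial_intW : ∫ r in Ioi (0:ℝ), r * ((1 + r^2)^2)⁻¹ = 1/2 := by
  have hderiv : ∀ x ∈ Ioi (0:ℝ), HasDerivAt (fun r : ℝ => -(1/2) * (1 + r^2)⁻¹)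
      (x * ((1 + x^2)^2)⁻¹) x := by
    intro x _
    have h1 : HasDerivAt (fun r : ℝ => 1 + r^2) (2*x) x := by
      simpa using ((hasDerivAt_pow 2 x).const_add 1)
    have h0 : (1 + x^2) ≠ 0 := by positivity
    have := (h1.inv h0).const_mul (-(1/2) : ℝ)
    refine this.congr_deriv ?_
    ring
  have htend : Filter.Tendsto (fun r : ℝ => -(1/2) * (1 + r^2)⁻¹) Filter.atTop (nhds 0) := by
    rw [show (0:ℝ) = -(1/2) * 0 by ring]
    apply Filter.Tendsto.const_mul
    apply Filter.Tendsto.inv_tendsto_atTop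
    apply Filter.tendsto_atTop_add_const_left
    exact Filter.tendsto_pow_atTop (by norm_num)
  have hcont : ContinuousWithinAt (fun r : ℝ => -(1/2) * (1 + r^2)⁻¹) (Ici 0) 0 := by
    exact (continuous_const.mul ((continuous_const.add (continuous_pow 2)).inv₀
      (fun x => by simp only [Pi.add_apply]; positivity))).continuousWithinAt
  have := integral_Ioi_of_hasDerivAt_of_nonneg hcont hderiv ?_ htend
  · rw [this]; norm_num
  · intro x hx
    have : (0:ℝ) < x := hx
    positivity

private lemma fs_integralW : ∫ w : ℂ, fsdW w = Real.pi := by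
  rw [show (fun w : ℂ => fsdW w) = (fun w : ℂ => ((1 + Complex.normSq w)^2)⁻¹) from rfl]
  rw [← Complex.integral_comp_polarCoord_symm, polarCoord_target]
  calc ∫ p in Ioi (0:ℝ) ×ˢ Ioo (-Real.pi) Real.pi,
        p.1 • ((1 + Complex.normSq (Complex.polarCoord.symm p))^2)⁻¹
      = ∫ p in Ioi (0:ℝ) ×ˢ Ioo (-Real.pi) Real.pi, (p.1 * ((1 + p.1^2)^2)⁻¹) * 1 := by
        apply setIntegral_congr_fun (measurableSet_Ioi.prod measurableSet_Ioo)
        intro p _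
        have h2 : Complex.normSq (Complex.polarCoord.symm p) = p.1^2 := by
          rw [← Complex.sq_norm, Complex.norm_polarCoord_symm, _root_.sq_abs]
        simp only [h2, smul_eq_mul, mul_one]
    _ = (∫ r in Ioi (0:ℝ), r * ((1 + r^2)^2)⁻¹) * ∫ _ in Ioo (-Real.pi) Real.pi, (1:ℝ) := by
        rw [MeasureTheory.Measure.volume_eq_prod]
        exact setIntegral_prod_mul (fun r : ℝ => r * ((1 + r^2)^2)⁻¹) (fun _ : ℝ => (1:ℝ)) _ _
    _ = Real.pi := by
        rw [radial_intW, integral_const, Measure.real, Measure.restrict_apply MeasurableSet.univ, Set.univ_inter,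
          Real.volume_Ioo]
        rw [show Real.pi - -Real.pi = 2 * Real.pi by ring, ENNReal.toReal_ofReal (by positivity)]
        simp only [smul_eq_mul, mul_one]
        ring

private lemma fs_integrableW : Integrable fsdW := by
  have h := integrable_rpow_neg_one_add_norm_sq (E := ℂ) (μ := volume) (r := 4)
    (by rw [Complex.finrank_real_complex]; norm_num)
  have heq : (fun x : ℂ => ((1:ℝ) + ‖x‖ ^ 2) ^ (-(4:ℝ) / 2)) = fsdW := by
    funext w
    have hp : (0:ℝ) < 1 + ‖w‖^2 := by positivity
    rw [fsdW, show Complex.normSq w = ‖w‖^2 by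
      rw [Complex.sq_norm]]
    rw [show (-(4:ℝ)/2) = ((-2 : ℤ) : ℝ) by norm_num, Real.rpow_intCast, zpow_neg]
    congr 1
  rw [← heq]
  exact h

private lemma measure_lineW : volume ({w : ℂ | w.im^2 = w.re^2}) = 0 := by
  have h1 : {w : ℂ | w.im^2 = w.re^2} ⊆
      (LinearMap.ker (Complex.imLm - Complex.reLm) : Set ℂ) ∪
      (LinearMap.ker (Complex.imLm + Complex.reLm) : Set ℂ) := by
    intro w hw
    have h2 : (w.im - w.re) * (w.im + w.re) = 0 := by
      have h3 : w.im^2 = w.re^2 := hw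
      linear_combination h3
    rcases mul_eq_zero.mp h2 with h | h
    · left
      show w ∈ LinearMap.ker (Complex.imLm - Complex.reLm)
      simpa [LinearMap.mem_ker] using h
    · right
      show w ∈ LinearMap.ker (Complex.imLm + Complex.reLm)
      simpa [LinearMap.mem_ker] using h
  refine measure_mono_null h1 (measure_union_null ?_ ?_) <;>
  · apply Measure.addHaar_submodule
    intro htop
    rw [LinearMap.ker_eq_top] at htop
    have := LinearMap.ext_iff.mp htop I
    simp at this

private lemma phi_derivW (c : ℂ) (z : ℂ) (hz : z ≠ 0) :
    HasDerivAt (phiW c) (1 - c * (z^2)⁻¹) z := by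
  have h1 : HasDerivAt (fun w : ℂ => w) 1 z := hasDerivAt_id z
  have h2 : HasDerivAt (fun w : ℂ => c * w⁻¹) (c * -((z^2)⁻¹)) z :=
    (hasDerivAt_inv hz).const_mul c
  have h3 := h1.add h2
  have h4 : (1 : ℂ) + c * -((z^2)⁻¹) = 1 - c * (z^2)⁻¹ := by ring
  rw [h4] at h3
  exact h3

private lemma phi_pointW (c : ℂ) (z : ℂ) (hz : z ≠ 0)
    (hD : 0 < Complex.normSq z + Complex.normSq (z^2 + c)) :
    Complex.normSq (1 - c * (z^2)⁻¹) * fsdW (phiW c z) = hfunW c z := by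
  rw [fsdW, phiW, hfunW]
  have hz2 : (z^2 : ℂ) ≠ 0 := pow_ne_zero 2 hz
  have e1 : (1 - c * (z^2)⁻¹) = (z^2 - c) * (z^2)⁻¹ := by field_simp
  have e2 : z + c * z⁻¹ = (z^2 + c) * z⁻¹ := by field_simp
  have hnz : Complex.normSq z ≠ 0 := fun h => hz (Complex.normSq_eq_zero.mp h)
  rw [e1, e2, map_mul, map_mul, Complex.normSq_inv, Complex.normSq_inv, map_pow]
  have hD' : Complex.normSq z + Complex.normSq (z^2 + c) ≠ 0 := hD.ne'
  field_simp

/-- Points on the circle `normSq z = |a|` are mapped by `phiW (a*I)` into the pair of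
diagonal lines. -/
private lemma phi_lineW (a : ℝ) (ha : a ≠ 0) (z : ℂ) (hn : Complex.normSq z = |a|) :
    ((phiW ((a:ℂ)*I) z).im)^2 = ((phiW ((a:ℂ)*I) z).re)^2 := by
  rw [phiW]
  have hre : (z + ((a:ℂ)*I) * z⁻¹).re = z.re + a * z.im / |a| := by
    rw [Complex.add_re, Complex.mul_re]
    simp [Complex.inv_re, Complex.inv_im, hn]
    ring
  have him : (z + ((a:ℂ)*I) * z⁻¹).im = z.im + a * z.re / |a| := by
    rw [Complex.add_im, Complex.mul_im]
    simp [Complex.inv_re, Complex.inv_im, hn]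
    ring
  have ha2 : a^2 = |a|^2 := (_root_.sq_abs a).symm
  have ha' : |a| ≠ 0 := abs_ne_zero.mpr ha
  rw [hre, him]
  field_simp
  linear_combination (z.re ^ 2 - z.im ^ 2) * ha2

/-- Each point off the diagonal lines has a `phiW`-preimage outside the critical circle
and another one inside. -/
private lemma phi_rootsW (a : ℝ) (ha : a ≠ 0) (w : ℂ) (hw : w.im^2 ≠ w.re^2) :
    (∃ z, (Real.sqrt |a| < ‖z‖) ∧ phiW ((a:ℂ)*I) z = w) ∧
    (∃ z, (0 < ‖z‖ ∧ ‖z‖ < Real.sqrt |a|) ∧ phiW ((a:ℂ)*I) z = w) := by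
  set c : ℂ := (a:ℂ) * I with hcdef
  have hc : c ≠ 0 := by
    rw [hcdef]
    exact mul_ne_zero (Complex.ofReal_ne_zero.mpr ha) Complex.I_ne_zero
  have habs : ‖c‖ = |a| := by
    rw [hcdef, norm_mul, Complex.norm_I, Complex.norm_real, mul_one, Real.norm_eq_abs]
  set r : ℝ := Real.sqrt |a| with hrdef
  have hr : 0 < r := Real.sqrt_pos.2 (abs_pos.2 ha)
  have hr2 : r^2 = |a| := Real.sq_sqrt (abs_nonneg a)
  -- construct one root
  obtain ⟨s, hs⟩ := IsAlgClosed.exists_pow_nat_eq (w^2 - 4*c) (n := 2) (by norm_num)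
  set z : ℂ := (w + s)/2 with hzdef
  have hroot : z^2 - w*z + c = 0 := by rw [hzdef]; linear_combination hs/4
  have hz0 : z ≠ 0 := by
    intro h0
    apply hc
    rw [h0] at hroot
    simpa using hroot
  have hphiz : phiW c z = w := by
    rw [phiW]
    field_simp
    linear_combination hs/4 - hcdef
  -- the second root
  have hz0' : c * z⁻¹ ≠ 0 := mul_ne_zero hc (inv_ne_zero hz0)
  have hphiz' : phiW c (c * z⁻¹) = w := by
    rw [phiW, ← hphiz, phiW]
    rw [mul_inv, inv_inv]
    field_simp
    ring
  -- relation between the absolute values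
  have habs2 : ‖z‖ * ‖(c * z⁻¹)‖ = r^2 := by
    rw [← norm_mul, mul_comm z, mul_assoc, inv_mul_cancel₀ hz0, mul_one, habs, hr2]
  -- a root cannot lie on the circle
  have hcirc : ∀ u : ℂ, phiW c u = w → ‖u‖ ≠ r := by
    intro u hu habsu
    apply hw
    rw [← hu]
    apply phi_lineW a ha
    rw [← Complex.sq_norm, habsu, hr2]
  have habsz := hcirc z hphiz
  have habsz' := hcirc _ hphiz'
  have hposz : 0 < ‖z‖ := norm_pos_iff.mpr hz0
  have hposz' : 0 < ‖(c * z⁻¹)‖ := norm_pos_iff.mpr hz0'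
  rcases lt_or_gt_of_ne habsz with hlt | hgt
  · -- |z| < r, so |c/z| > r
    have h1 : r < ‖(c * z⁻¹)‖ := by
      nlinarith
    exact ⟨⟨c * z⁻¹, h1, hphiz'⟩, ⟨z, ⟨hposz, hlt⟩, hphiz⟩⟩
  · have h1 : ‖(c * z⁻¹)‖ < r := by
      nlinarith
    exact ⟨⟨z, hgt, hphiz⟩, ⟨c * z⁻¹, ⟨hposz', h1⟩, hphiz'⟩⟩

private lemma phi_covW (c : ℂ) (hc : c ≠ 0) (s : Set ℂ) (hs : MeasurableSet s)
    (hs0 : ∀ z ∈ s, z ≠ 0) (hinj : InjOn (phiW c) s)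
    (himg : ∀ w : ℂ, w.im^2 ≠ w.re^2 → w ∈ phiW c '' s) :
    IntegrableOn (hfunW c) s ∧ ∫ z in s, hfunW c z = Real.pi := by
  have hD : ∀ z : ℂ, 0 < Complex.normSq z + Complex.normSq (z^2 + c) := by
    intro z
    rcases eq_or_ne z 0 with rfl | hz
    · simpa using Complex.normSq_pos.2 hc
    · exact add_pos_of_pos_of_nonneg (Complex.normSq_pos.2 hz) (Complex.normSq_nonneg _)
  have hF' : ∀ z ∈ s, HasFDerivWithinAt (phiW c) (FmapW c z) s z := by
    intro z hz
    exact ((phi_derivW c z (hs0 z hz)).hasFDerivAt.restrictScalars ℝ).hasFDerivWithinAt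
  have hcov := integral_image_eq_integral_abs_det_fderiv_smul volume hs hF' hinj fsdW
  have hiff := integrableOn_image_iff_integrableOn_abs_det_fderiv_smul volume hs hF' hinj fsdW
  have himg_ae : phiW c '' s =ᵐ[volume] (univ : Set ℂ) := by
    rw [ae_eq_univ]
    refine measure_mono_null ?_ measure_lineW
    intro w hw
    simp only [mem_compl_iff] at hw
    by_contra hw'
    exact hw (himg w hw')
  have hfs_img : ∫ w in phiW c '' s, fsdW w = Real.pi := by
    rw [setIntegral_congr_set himg_ae, setIntegral_univ, fs_integralW]
  have heq : EqOn (fun z => |(FmapW c z).det| • fsdW (phiW c z)) (hfunW c) s := by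
    intro z hz
    have hz0 := hs0 z hz
    simp only [det_FmapW, smul_eq_mul, _root_.abs_of_nonneg (Complex.normSq_nonneg _)]
    exact phi_pointW c z hz0 (hD z)
  constructor
  · exact ((hiff.mp (fs_integrableW.integrableOn)).congr_fun heq hs)
  · rw [← setIntegral_congr_fun hs heq, ← hcov, hfs_img]

/-- The key integral identity. -/
private lemma key_integralW (a : ℝ) (ha : a ≠ 0) :
    Integrable (hfunW ((a:ℂ)*I)) ∧ ∫ z : ℂ, hfunW ((a:ℂ)*I) z = 2 * Real.pi := by
  set c : ℂ := (a:ℂ) * I with hcdef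
  have hc : c ≠ 0 := by
    rw [hcdef]
    exact mul_ne_zero (Complex.ofReal_ne_zero.mpr ha) Complex.I_ne_zero
  have habs : ‖c‖ = |a| := by
    rw [hcdef, norm_mul, Complex.norm_I, Complex.norm_real, mul_one, Real.norm_eq_abs]
  set r : ℝ := Real.sqrt |a| with hrdef
  have hr : 0 < r := Real.sqrt_pos.2 (abs_pos.2 ha)
  have hr2 : r^2 = |a| := Real.sq_sqrt (abs_nonneg a)
  set A : Set ℂ := {z | r < ‖z‖} with hA
  set B : Set ℂ := {z | 0 < ‖z‖} ∩ {z | ‖z‖ < r} with hB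
  have hAmeas : MeasurableSet A :=
    (isOpen_lt continuous_const continuous_norm).measurableSet
  have hBmeas : MeasurableSet B :=
    ((isOpen_lt continuous_const continuous_norm).inter
      (isOpen_lt continuous_norm continuous_const)).measurableSet
  have hA0 : ∀ z ∈ A, z ≠ 0 := by
    intro z hz h0
    rw [h0] at hz
    simp only [hA, mem_setOf_eq, norm_zero] at hz
    exact absurd hz (not_lt.mpr hr.le)
  have hB0 : ∀ z ∈ B, z ≠ 0 := by
    intro z hz h0
    rw [h0] at hz
    simp only [hB, mem_inter_iff, mem_setOf_eq, norm_zero, lt_irrefl] at hz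
    exact hz.1
  -- injectivity
  have hinj_core : ∀ z w : ℂ, z ≠ 0 → w ≠ 0 → phiW c z = phiW c w →
      z = w ∨ z * w = c := by
    intro z w hz hw h
    rw [phiW, phiW] at h
    have h2 : (z - w) * (z * w - c) = 0 := by
      field_simp at h
      linear_combination h
    rcases mul_eq_zero.mp h2 with h3 | h3
    · exact Or.inl (sub_eq_zero.mp h3)
    · exact Or.inr (sub_eq_zero.mp h3)
  have hinjA : InjOn (phiW c) A := by
    intro z hz w hw h
    rcases hinj_core z w (hA0 z hz) (hA0 w hw) h with h1 | h1
    · exact h1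
    · exfalso
      have h2 : ‖z‖ * ‖w‖ = r^2 := by
        rw [← norm_mul, h1, habs, hr2]
      have hz' : r < ‖z‖ := hz
      have hw' : r < ‖w‖ := hw
      nlinarith
  have hinjB : InjOn (phiW c) B := by
    intro z hz w hw h
    rcases hinj_core z w (hB0 z hz) (hB0 w hw) h with h1 | h1
    · exact h1
    · exfalso
      have h2 : ‖z‖ * ‖w‖ = r^2 := by
        rw [← norm_mul, h1, habs, hr2]
      have hz' : ‖z‖ < r := hz.2
      have hw' : ‖w‖ < r := hw.2
      have hz'' : 0 < ‖z‖ := hz.1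
      have hw'' : 0 < ‖w‖ := hw.1
      nlinarith
  -- surjectivity off the lines
  have himgA : ∀ w : ℂ, w.im^2 ≠ w.re^2 → w ∈ phiW c '' A := by
    intro w hw
    obtain ⟨⟨z, hz1, hz2⟩, _⟩ := phi_rootsW a ha w hw
    exact ⟨z, hz1, hz2⟩
  have himgB : ∀ w : ℂ, w.im^2 ≠ w.re^2 → w ∈ phiW c '' B := by
    intro w hw
    obtain ⟨_, ⟨z, hz1, hz2⟩⟩ := phi_rootsW a ha w hw
    exact ⟨z, ⟨hz1.1, hz1.2⟩, hz2⟩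
  have hcovA := phi_covW c hc A hAmeas hA0 hinjA himgA
  have hcovB := phi_covW c hc B hBmeas hB0 hinjB himgB
  -- the complement of A ∪ B is null
  have hdisj : Disjoint A B := by
    rw [Set.disjoint_left]
    intro z hz hz'
    have h1 : r < ‖z‖ := hz
    have h2 : ‖z‖ < r := hz'.2
    exact absurd h2 (not_lt.mpr h1.le)
  have hcompl : (A ∪ B)ᶜ ⊆ ({0} : Set ℂ) ∪ Metric.sphere (0:ℂ) r := by
    intro z hz
    simp only [mem_compl_iff, mem_union, hA, hB, mem_setOf_eq, mem_inter_iff, not_or, not_and,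
      not_lt] at hz
    obtain ⟨h1, h2⟩ := hz
    rcases eq_or_lt_of_le (norm_nonneg z) with h3 | h3
    · left
      simp only [mem_singleton_iff]
      exact norm_eq_zero.mp h3.symm
    · right
      have h4 := h2 h3
      simp only [mem_sphere_iff_norm, sub_zero]
      exact le_antisymm h1 h4
  have hnull : volume ((A ∪ B)ᶜ) = 0 := by
    refine measure_mono_null hcompl (measure_union_null ?_ ?_)
    · exact measure_singleton 0
    · exact Measure.addHaar_sphere volume 0 r
  have haeuniv : (A ∪ B : Set ℂ) =ᵐ[volume] (univ : Set ℂ) := by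
    rw [ae_eq_univ]
    exact hnull
  have hIon : IntegrableOn (hfunW c) (A ∪ B) := hcovA.1.union hcovB.1
  constructor
  · rw [← integrableOn_univ]
    exact hIon.congr_set_ae haeuniv.symm
  · calc ∫ z : ℂ, hfunW c z = ∫ z in (univ : Set ℂ), hfunW c z := by rw [setIntegral_univ]
      _ = ∫ z in A ∪ B, hfunW c z := (setIntegral_congr_set haeuniv).symm
      _ = (∫ z in A, hfunW c z) + ∫ z in B, hfunW c z :=
          setIntegral_union hdisj hBmeas hcovA.1 hcovB.1
      _ = 2 * Real.pi := by rw [hcovA.2, hcovB.2]; ring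

end WillmoreAux

/-- Away from the singular time t = T/2 the solution is smooth in z and the
Willmore functional ∫|U|² equals 2π. -/
theorem willmore_at_regular_time (T : ℝ)
    (U : ℂ × ℝ → ℂ)
    (hU : ∀ p, U p = Complex.I * (p.1 ^ 2 - 2 * Complex.I * (p.2 : ℂ) + Complex.I * (T : ℂ)) /
      ((Complex.normSq p.1 +
          Complex.normSq (p.1 ^ 2 + 2 * Complex.I * (p.2 : ℂ) - Complex.I * (T : ℂ)) : ℝ) : ℂ)) :
    ∀ t : ℝ, t ≠ T / 2 →
      (∀ z : ℂ, 0 < Complex.normSq z +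
          Complex.normSq (z ^ 2 + 2 * Complex.I * (t : ℂ) - Complex.I * (T : ℂ))) ∧
      ContDiff ℝ (⊤ : ℕ∞) (fun z : ℂ => U (z, t)) ∧
      ∫ z : ℂ, ‖U (z, t)‖ ^ 2 = 2 * Real.pi := by
  intro t ht
  set a : ℝ := 2*t - T with hadef
  have ha : a ≠ 0 := by
    intro h
    apply ht
    rw [hadef] at h
    linarith
  have haI : ((a:ℂ) * Complex.I) ≠ 0 :=
    mul_ne_zero (Complex.ofReal_ne_zero.mpr ha) Complex.I_ne_zero
  have hpos : ∀ z : ℂ, 0 < Complex.normSq z +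
      Complex.normSq (z ^ 2 + 2 * Complex.I * (t:ℂ) - Complex.I * (T:ℂ)) := by
    intro z
    have h0 : z ^ 2 + 2 * Complex.I * (t:ℂ) - Complex.I * (T:ℂ) = z^2 + (a:ℂ)*Complex.I := by
      rw [hadef]; push_cast; ring
    rw [h0]
    rcases eq_or_ne z 0 with rfl | hz
    · simpa using Complex.normSq_pos.2 haI
    · exact add_pos_of_pos_of_nonneg (Complex.normSq_pos.2 hz) (Complex.normSq_nonneg _)
  refine ⟨hpos, ?_, ?_⟩
  · -- smoothness
    have hfeq : (fun z : ℂ => U (z, t)) = fun z : ℂ =>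
        Complex.I * (z ^ 2 - 2 * Complex.I * (t:ℂ) + Complex.I * (T:ℂ)) /
        ((Complex.normSq z +
          Complex.normSq (z ^ 2 + 2 * Complex.I * (t:ℂ) - Complex.I * (T:ℂ)) : ℝ) : ℂ) := by
      funext z
      exact hU (z, t)
    rw [hfeq]
    have hnormSq : ContDiff ℝ (⊤ : ℕ∞) (Complex.normSq : ℂ → ℝ) := by
      have h1 : (Complex.normSq : ℂ → ℝ) = fun z => z.re*z.re + z.im*z.im := by
        funext z
        rw [Complex.normSq_apply]
      rw [h1]
      exact (Complex.reCLM.contDiff.mul Complex.reCLM.contDiff).add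
        (Complex.imCLM.contDiff.mul Complex.imCLM.contDiff)
    have hpoly : ContDiff ℝ (⊤ : ℕ∞)
        (fun z : ℂ => z ^ 2 + 2 * Complex.I * (t:ℂ) - Complex.I * (T:ℂ)) :=
      ((contDiff_id.pow 2).add contDiff_const).sub contDiff_const
    have hnum : ContDiff ℝ (⊤ : ℕ∞)
        (fun z : ℂ => Complex.I * (z ^ 2 - 2 * Complex.I * (t:ℂ) + Complex.I * (T:ℂ))) :=
      contDiff_const.mul (((contDiff_id.pow 2).sub contDiff_const).add contDiff_const)
    have hden : ContDiff ℝ (⊤ : ℕ∞) (fun z : ℂ =>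
        ((Complex.normSq z +
          Complex.normSq (z ^ 2 + 2 * Complex.I * (t:ℂ) - Complex.I * (T:ℂ)) : ℝ) : ℂ)) :=
      Complex.ofRealCLM.contDiff.comp (hnormSq.add (hnormSq.comp hpoly))
    have hdiv : ContDiff ℝ (⊤ : ℕ∞) (fun z : ℂ =>
        Complex.I * (z ^ 2 - 2 * Complex.I * (t:ℂ) + Complex.I * (T:ℂ)) *
        (((Complex.normSq z +
          Complex.normSq (z ^ 2 + 2 * Complex.I * (t:ℂ) - Complex.I * (T:ℂ)) : ℝ) : ℂ))⁻¹) :=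
      hnum.mul (hden.inv (fun z => Complex.ofReal_ne_zero.mpr (hpos z).ne'))
    simpa only [div_eq_mul_inv] using hdiv
  · -- the integral
    have hfun_eq : (fun z : ℂ => ‖U (z, t)‖ ^ 2) = hfunW ((a:ℂ)*Complex.I) := by
      funext z
      rw [hU (z, t)]
      have hnum : (z ^ 2 - 2 * Complex.I * (t:ℂ) + Complex.I * (T:ℂ))
          = z^2 - (a:ℂ)*Complex.I := by
        rw [hadef]; push_cast; ring
      have hden : (z ^ 2 + 2 * Complex.I * (t:ℂ) - Complex.I * (T:ℂ))
          = z^2 + (a:ℂ)*Complex.I := by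
        rw [hadef]; push_cast; ring
      have hDpos : 0 < Complex.normSq z + Complex.normSq (z^2 + (a:ℂ)*Complex.I) := by
        have := hpos z
        rw [hden] at this
        exact this
      show ‖Complex.I * (z ^ 2 - 2 * Complex.I * (t:ℂ) + Complex.I * (T:ℂ)) /
        ((Complex.normSq z +
          Complex.normSq (z ^ 2 + 2 * Complex.I * (t:ℂ) - Complex.I * (T:ℂ)) : ℝ) : ℂ)‖ ^ 2
          = hfunW ((a:ℂ)*Complex.I) z
      rw [hnum, hden, hfunW]
      rw [norm_div, norm_mul, Complex.norm_I, one_mul, Complex.norm_real, div_pow,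
        Complex.sq_norm, Real.norm_eq_abs, _root_.sq_abs]
    rw [hfun_eq]
    exact (key_integralW a ha).2
end

section
/- Fix c ∈ ℂ and set f(z,t) = z³ + 6itz + c, D = |z|² + |f|², U = i(2z³ − c)/D, a = −i(z̄ + (3z² + 6it)·conj(f))/D and V = 2i·a_z. Then at every point (z,t) with D(z,t) ≠ 0 the pair (U,V) satisfies the DSII equation; moreover, if c ≠ 0 then D(z,t) > 0 for all (z,t), so U and V are smooth on all of ℂ×ℝ. -/
open Complex ComplexConjugate

noncomputable section

namespace DSII

/-- The model linear map `v ↦ a v₁ + b conj v₁ + d v₂`. -/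
def wd (a b d : ℂ) : ℂ × ℝ →L[ℝ] ℂ :=
  a • (ContinuousLinearMap.fst ℝ ℂ ℝ) +
  b • ((Complex.conjCLE.toContinuousLinearMap).comp (ContinuousLinearMap.fst ℝ ℂ ℝ)) +
  d • (Complex.ofRealCLM.comp (ContinuousLinearMap.snd ℝ ℂ ℝ))

@[simp] lemma wd_apply (a b d : ℂ) (v : ℂ × ℝ) :
    wd a b d v = a * v.1 + b * conj v.1 + d * (v.2 : ℂ) := by
  simp [wd, smul_eq_mul]

variable {g h : ℂ × ℝ → ℂ} {p : ℂ × ℝ} {a b d a' b' d' : ℂ}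

lemma wd_congr (hg : HasFDerivAt g (wd a b d) p) (ha : a' = a) (hb : b' = b) (hd : d' = d) :
    HasFDerivAt g (wd a' b' d') p := by rw [ha, hb, hd]; exact hg

lemma dz_eq (hg : HasFDerivAt g (wd a b d) p) : dz g p = a := by
  unfold dz; rw [hg.fderiv]
  simp only [wd_apply, map_one, Complex.conj_I, Complex.ofReal_zero, mul_zero, add_zero, mul_one]
  linear_combination (2:ℂ)⁻¹ * (b - a) * Complex.I_sq

lemma dzb_eq (hg : HasFDerivAt g (wd a b d) p) : dzb g p = b := by
  unfold dzb; rw [hg.fderiv]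
  simp only [wd_apply, map_one, Complex.conj_I, Complex.ofReal_zero, mul_zero, add_zero, mul_one]
  linear_combination (2:ℂ)⁻¹ * (a - b) * Complex.I_sq

lemma dt_eq (hg : HasFDerivAt g (wd a b d) p) : dt g p = d := by
  unfold dt; rw [hg.fderiv]
  simp [wd_apply]

lemma dz_congr {g g' : ℂ × ℝ → ℂ} (hg : g =ᶠ[nhds p] g') : dz g p = dz g' p := by
  unfold dz; rw [Filter.EventuallyEq.fderiv_eq hg]

lemma dzb_congr {g g' : ℂ × ℝ → ℂ} (hg : g =ᶠ[nhds p] g') : dzb g p = dzb g' p := by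
  unfold dzb; rw [Filter.EventuallyEq.fderiv_eq hg]

lemma hw_z : HasFDerivAt (fun q : ℂ × ℝ => q.1) (wd 1 0 0) p := by
  have h2 : wd 1 0 0 = ContinuousLinearMap.fst ℝ ℂ ℝ := by
    apply ContinuousLinearMap.ext; intro v; simp
  rw [h2]; exact hasFDerivAt_fst

lemma hw_w : HasFDerivAt (fun q : ℂ × ℝ => conj q.1) (wd 0 1 0) p := by
  have h1 := (Complex.conjCLE.toContinuousLinearMap.hasFDerivAt (x := p.1)).comp p
    (hasFDerivAt_fst (p := p) (𝕜 := ℝ))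
  have h2 : wd 0 1 0 =
      (Complex.conjCLE.toContinuousLinearMap).comp (ContinuousLinearMap.fst ℝ ℂ ℝ) := by
    apply ContinuousLinearMap.ext; intro v; simp
  have h3 : (fun q : ℂ × ℝ => conj q.1) =
      (⇑Complex.conjCLE.toContinuousLinearMap ∘ Prod.fst) := by
    funext q; simp
  rw [h2, h3]; exact h1

lemma hw_t : HasFDerivAt (fun q : ℂ × ℝ => (q.2 : ℂ)) (wd 0 0 1) p := by
  have h1 := (Complex.ofRealCLM.hasFDerivAt (x := p.2)).comp p
    (hasFDerivAt_snd (p := p) (𝕜 := ℝ))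
  have h2 : wd 0 0 1 = Complex.ofRealCLM.comp (ContinuousLinearMap.snd ℝ ℂ ℝ) := by
    apply ContinuousLinearMap.ext; intro v; simp
  have h3 : (fun q : ℂ × ℝ => (q.2 : ℂ)) = (⇑Complex.ofRealCLM ∘ Prod.snd) := by
    funext q; simp
  rw [h2, h3]; exact h1

lemma hw_const (k : ℂ) : HasFDerivAt (fun _ : ℂ × ℝ => k) (wd 0 0 0) p := by
  have h2 : wd (0:ℂ) 0 0 = 0 := by apply ContinuousLinearMap.ext; intro v; simp
  rw [h2]; exact hasFDerivAt_const k p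

lemma hw_add (hg : HasFDerivAt g (wd a b d) p) (hh : HasFDerivAt h (wd a' b' d') p) :
    HasFDerivAt (fun q => g q + h q) (wd (a + a') (b + b') (d + d')) p := by
  have := hg.add hh
  have h2 : wd (a + a') (b + b') (d + d') = wd a b d + wd a' b' d' := by
    apply ContinuousLinearMap.ext; intro v; simp; ring
  rw [h2]; exact this

lemma hw_sub (hg : HasFDerivAt g (wd a b d) p) (hh : HasFDerivAt h (wd a' b' d') p) :
    HasFDerivAt (fun q => g q - h q) (wd (a - a') (b - b') (d - d')) p := by
  have := hg.sub hh
  have h2 : wd (a - a') (b - b') (d - d') = wd a b d - wd a' b' d' := by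
    apply ContinuousLinearMap.ext; intro v; simp; ring
  rw [h2]; exact this

lemma hw_mul (hg : HasFDerivAt g (wd a b d) p) (hh : HasFDerivAt h (wd a' b' d') p) :
    HasFDerivAt (fun q => g q * h q)
      (wd (g p * a' + h p * a) (g p * b' + h p * b) (g p * d' + h p * d)) p := by
  have := hg.mul hh
  have h2 : wd (g p * a' + h p * a) (g p * b' + h p * b) (g p * d' + h p * d)
      = g p • wd a' b' d' + h p • wd a b d := by
    apply ContinuousLinearMap.ext; intro v; simp [smul_eq_mul]; ring
  rw [h2]; exact this

lemma hw_smul (k : ℂ) (hg : HasFDerivAt g (wd a b d) p) :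
    HasFDerivAt (fun q => k * g q) (wd (k * a) (k * b) (k * d)) p := by
  have := hg.const_mul k
  have h2 : wd (k * a) (k * b) (k * d) = k • wd a b d := by
    apply ContinuousLinearMap.ext; intro v; simp [smul_eq_mul]; ring
  rw [h2]; exact this

lemma hw_sq (hg : HasFDerivAt g (wd a b d) p) :
    HasFDerivAt (fun q => g q ^ 2) (wd (2 * g p * a) (2 * g p * b) (2 * g p * d)) p := by
  simp only [pow_two]
  exact wd_congr (hw_mul hg hg) (by ring) (by ring) (by ring)

lemma hw_cube (hg : HasFDerivAt g (wd a b d) p) :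
    HasFDerivAt (fun q => g q ^ 3)
      (wd (3 * g p ^ 2 * a) (3 * g p ^ 2 * b) (3 * g p ^ 2 * d)) p := by
  have h3 : (fun q => g q ^ 3) = fun q => g q ^ 2 * g q := by funext q; ring
  rw [h3]
  exact wd_congr (hw_mul (hw_sq hg) hg) (by ring) (by ring) (by ring)

lemma hw_inv (hg : HasFDerivAt g (wd a b d) p) (h0 : g p ≠ 0) :
    HasFDerivAt (fun q => (g q)⁻¹)
      (wd (-(g p ^ 2)⁻¹ * a) (-(g p ^ 2)⁻¹ * b) (-(g p ^ 2)⁻¹ * d)) p := by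
  have h1 := (hasFDerivAt_inv' (𝕜 := ℝ) h0).comp p hg
  have h2 : wd (-(g p ^ 2)⁻¹ * a) (-(g p ^ 2)⁻¹ * b) (-(g p ^ 2)⁻¹ * d)
      = (-ContinuousLinearMap.mulLeftRight ℝ ℂ (g p)⁻¹ (g p)⁻¹).comp (wd a b d) := by
    apply ContinuousLinearMap.ext; intro v
    simp [ContinuousLinearMap.mulLeftRight_apply]
    field_simp
    ring
  rw [h2]; exact h1

lemma hw_div (hg : HasFDerivAt g (wd a b d) p) (hh : HasFDerivAt h (wd a' b' d') p)
    (h0 : h p ≠ 0) :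
    HasFDerivAt (fun q => g q / h q)
      (wd ((a * h p - g p * a') / h p ^ 2) ((b * h p - g p * b') / h p ^ 2)
        ((d * h p - g p * d') / h p ^ 2)) p := by
  simp only [div_eq_mul_inv]
  exact wd_congr (hw_mul hg (hw_inv hh h0))
    (by field_simp; ring) (by field_simp; ring) (by field_simp; ring)

lemma hw_conj (hg : HasFDerivAt g (wd a b d) p) :
    HasFDerivAt (fun q => conj (g q)) (wd (conj b) (conj a) (conj d)) p := by
  have h1 := (Complex.conjCLE.toContinuousLinearMap.hasFDerivAt (x := g p)).comp p hg
  have h2 : wd (conj b) (conj a) (conj d)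
      = (Complex.conjCLE.toContinuousLinearMap).comp (wd a b d) := by
    apply ContinuousLinearMap.ext; intro v
    simp [map_add, map_mul, Complex.conj_conj, Complex.conj_ofReal]
    ring
  rw [h2]; exact h1

end DSII
namespace DSII

def fz (q : ℂ × ℝ) : ℂ := 3 * q.1 ^ 2 + 6 * Complex.I * (q.2 : ℂ)
def fbw (q : ℂ × ℝ) : ℂ := 3 * (conj q.1) ^ 2 - 6 * Complex.I * (q.2 : ℂ)
def FF (c : ℂ) (q : ℂ × ℝ) : ℂ := q.1 ^ 3 + 6 * Complex.I * (q.2 : ℂ) * q.1 + c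
def FB (c : ℂ) (q : ℂ × ℝ) : ℂ :=
  (conj q.1) ^ 3 - 6 * Complex.I * (q.2 : ℂ) * conj q.1 + conj c
def DD (c : ℂ) (q : ℂ × ℝ) : ℂ := q.1 * conj q.1 + FF c q * FB c q
def DZ (c : ℂ) (q : ℂ × ℝ) : ℂ := conj q.1 + fz q * FB c q
def DW (c : ℂ) (q : ℂ × ℝ) : ℂ := q.1 + FF c q * fbw q
def DT (c : ℂ) (q : ℂ × ℝ) : ℂ := 6 * Complex.I * q.1 * FB c q - 6 * Complex.I * conj q.1 * FF c q
def NU (c : ℂ) (q : ℂ × ℝ) : ℂ := Complex.I * (2 * q.1 ^ 3 - c)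
def NB (c : ℂ) (q : ℂ × ℝ) : ℂ := -Complex.I * (2 * (conj q.1) ^ 3 - conj c)
def AA (c : ℂ) (q : ℂ × ℝ) : ℂ := 6 * Complex.I * q.1 ^ 2 * DD c q - NU c q * DZ c q
def BB (c : ℂ) (q : ℂ × ℝ) : ℂ := -(NU c q) * DW c q
def CC (c : ℂ) (q : ℂ × ℝ) : ℂ := -(NU c q) * DT c q
def EE (c : ℂ) (q : ℂ × ℝ) : ℂ := -Complex.I * (6 * q.1 * FB c q * DD c q - DZ c q ^ 2)
def GB (c : ℂ) (q : ℂ × ℝ) : ℂ :=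
  Complex.I * (6 * conj q.1 * FF c q * DD c q - DW c q ^ 2)

variable (c : ℂ) (q : ℂ × ℝ)

lemma conj_fz : conj (fz q) = fbw q := by
  simp only [fz, fbw, map_add, map_sub, map_mul, map_pow, map_ofNat, Complex.conj_I,
    Complex.conj_ofReal]
  ring

lemma conj_fbw : conj (fbw q) = fz q := by
  simp only [fz, fbw, map_add, map_sub, map_mul, map_pow, map_ofNat, Complex.conj_I,
    Complex.conj_ofReal, Complex.conj_conj]
  ring

lemma conj_FF : conj (FF c q) = FB c q := by
  simp only [FF, FB, map_add, map_sub, map_mul, map_pow, map_ofNat, Complex.conj_I,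
    Complex.conj_ofReal]
  ring

lemma conj_FB : conj (FB c q) = FF c q := by
  simp only [FF, FB, map_add, map_sub, map_mul, map_pow, map_ofNat, Complex.conj_I,
    Complex.conj_ofReal, Complex.conj_conj]
  ring

lemma conj_DD : conj (DD c q) = DD c q := by
  simp only [DD, map_add, map_mul, conj_FF, conj_FB, Complex.conj_conj]
  ring

lemma conj_DZ : conj (DZ c q) = DW c q := by
  simp only [DZ, DW, map_add, map_mul, conj_fz, conj_FB, Complex.conj_conj]
  ring

lemma conj_DW : conj (DW c q) = DZ c q := by
  simp only [DZ, DW, map_add, map_mul, conj_fbw, conj_FF, Complex.conj_conj]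
  ring

lemma conj_NU : conj (NU c q) = NB c q := by
  simp only [NU, NB, map_sub, map_mul, map_pow, map_ofNat, map_neg, Complex.conj_I]

lemma conj_BB : conj (BB c q) = -(NB c q) * DZ c q := by
  simp only [BB, map_mul, map_neg, conj_NU, conj_DW]

lemma conj_EE : conj (EE c q) = GB c q := by
  simp only [EE, GB, map_sub, map_mul, map_pow, map_neg, map_ofNat, Complex.conj_I,
    conj_FB, conj_DD, conj_DZ, Complex.conj_conj]
  ring

lemma DD_real : DD c q = ((Complex.normSq q.1 + Complex.normSq (FF c q) : ℝ) : ℂ) := by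
  push_cast
  rw [← Complex.mul_conj q.1, ← Complex.mul_conj (FF c q), conj_FF]
  rfl

/-! derivative lemmas -/

lemma hwfz : HasFDerivAt fz (wd (6 * q.1) 0 (6 * Complex.I)) q := by
  unfold fz
  exact wd_congr (hw_add (hw_smul 3 (hw_sq hw_z)) (hw_smul (6 * Complex.I) hw_t))
    (by ring) (by ring) (by ring)

lemma hwfbw : HasFDerivAt fbw (wd 0 (6 * conj q.1) (-6 * Complex.I)) q := by
  unfold fbw
  exact wd_congr (hw_sub (hw_smul 3 (hw_sq hw_w)) (hw_smul (6 * Complex.I) hw_t))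
    (by ring) (by ring) (by ring)

lemma hwFF : HasFDerivAt (FF c) (wd (fz q) 0 (6 * Complex.I * q.1)) q := by
  unfold FF
  exact wd_congr (hw_add (hw_add (hw_cube hw_z)
      (hw_mul (hw_smul (6 * Complex.I) hw_t) hw_z)) (hw_const c))
    (by simp only [fz]; ring) (by ring) (by ring)

lemma hwFB : HasFDerivAt (FB c) (wd 0 (fbw q) (-6 * Complex.I * conj q.1)) q := by
  unfold FB
  exact wd_congr (hw_add (hw_sub (hw_cube hw_w)
      (hw_mul (hw_smul (6 * Complex.I) hw_t) hw_w)) (hw_const (conj c)))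
    (by ring) (by simp only [fbw]; ring) (by ring)

lemma hwDD : HasFDerivAt (DD c) (wd (DZ c q) (DW c q) (DT c q)) q := by
  unfold DD
  exact wd_congr (hw_add (hw_mul hw_z hw_w) (hw_mul (hwFF c q) (hwFB c q)))
    (by simp only [DZ]; ring) (by simp only [DW]; ring) (by simp only [DT]; ring)

lemma hwDZ : HasFDerivAt (DZ c)
    (wd (6 * q.1 * FB c q) (1 + fz q * fbw q)
      (6 * Complex.I * FB c q - 6 * Complex.I * conj q.1 * fz q)) q := by
  unfold DZ
  exact wd_congr (hw_add hw_w (hw_mul (hwfz q) (hwFB c q)))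
    (by ring) (by ring) (by ring)

lemma hwDW : HasFDerivAt (DW c)
    (wd (1 + fz q * fbw q) (6 * conj q.1 * FF c q)
      (6 * Complex.I * q.1 * fbw q - 6 * Complex.I * FF c q)) q := by
  unfold DW
  exact wd_congr (hw_add hw_z (hw_mul (hwFF c q) (hwfbw q)))
    (by ring) (by ring) (by ring)

lemma hwNU : HasFDerivAt (NU c) (wd (6 * Complex.I * q.1 ^ 2) 0 0) q := by
  unfold NU
  exact wd_congr (hw_smul Complex.I (hw_sub (hw_smul 2 (hw_cube hw_z)) (hw_const c)))
    (by ring) (by ring) (by ring)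

lemma hwAA : HasFDerivAt (AA c)
    (wd (12 * Complex.I * q.1 * DD c q - 6 * q.1 * NU c q * FB c q)
      (6 * Complex.I * q.1 ^ 2 * DW c q - NU c q * (1 + fz q * fbw q))
      (6 * Complex.I * q.1 ^ 2 * DT c q -
        NU c q * (6 * Complex.I * FB c q - 6 * Complex.I * conj q.1 * fz q))) q := by
  unfold AA
  exact wd_congr (hw_sub (hw_mul (hw_smul (6 * Complex.I) (hw_sq hw_z)) (hwDD c q))
      (hw_mul (hwNU c q) (hwDZ c q)))
    (by ring) (by ring) (by ring)

lemma hwBB : HasFDerivAt (BB c)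
    (wd (-6 * Complex.I * q.1 ^ 2 * DW c q - NU c q * (1 + fz q * fbw q))
      (-(NU c q) * (6 * conj q.1 * FF c q))
      (-(NU c q) * (6 * Complex.I * q.1 * fbw q - 6 * Complex.I * FF c q))) q := by
  unfold BB
  have h : (fun q => -(NU c q) * DW c q) = fun q => (-1 : ℂ) * (NU c q * DW c q) := by
    funext q; ring
  rw [h]
  exact wd_congr (hw_smul (-1) (hw_mul (hwNU c q) (hwDW c q)))
    (by ring) (by ring) (by ring)

lemma hwEE : HasFDerivAt (EE c)
    (wd (-Complex.I * (6 * FB c q * DD c q + 6 * q.1 * FB c q * DZ c q -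
          2 * DZ c q * (6 * q.1 * FB c q)))
      (-Complex.I * (6 * q.1 * (fbw q * DD c q + FB c q * DW c q) -
          2 * DZ c q * (1 + fz q * fbw q)))
      (-Complex.I * (6 * q.1 * (-6 * Complex.I * conj q.1 * DD c q + FB c q * DT c q) -
          2 * DZ c q * (6 * Complex.I * FB c q - 6 * Complex.I * conj q.1 * fz q)))) q := by
  unfold EE
  exact wd_congr (hw_smul (-Complex.I)
      (hw_sub (hw_mul (hw_mul (hw_smul 6 hw_z) (hwFB c q)) (hwDD c q)) (hw_sq (hwDZ c q))))
    (by ring) (by ring) (by ring)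

/-! quotient-level lemmas -/

variable {c q}

lemma hwU (hq : DD c q ≠ 0) :
    HasFDerivAt (fun p => NU c p / DD c p)
      (wd (AA c q / DD c q ^ 2) (BB c q / DD c q ^ 2) (CC c q / DD c q ^ 2)) q :=
  wd_congr (hw_div (hwNU c q) (hwDD c q) hq)
    (by simp only [AA]) (by simp only [BB]; ring) (by simp only [CC]; ring)

lemma hwa (hq : DD c q ≠ 0) :
    HasFDerivAt (fun p => -Complex.I * DZ c p / DD c p)
      (wd (EE c q / DD c q ^ 2)
        ((-Complex.I * (1 + fz q * fbw q) * DD c q + Complex.I * DZ c q * DW c q) / DD c q ^ 2)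
        ((-Complex.I * (6 * Complex.I * FB c q - 6 * Complex.I * conj q.1 * fz q) * DD c q +
            Complex.I * DZ c q * DT c q) / DD c q ^ 2)) q :=
  wd_congr (hw_div (hw_smul (-Complex.I) (hwDZ c q)) (hwDD c q) hq)
    (by simp only [EE]; ring) (by ring) (by ring)

lemma hwU1 (hq : DD c q ≠ 0) :
    HasFDerivAt (fun p => AA c p / DD c p ^ 2)
      (wd (((12 * Complex.I * q.1 * DD c q - 6 * q.1 * NU c q * FB c q) * DD c q -
            2 * AA c q * DZ c q) / DD c q ^ 3)
        (((6 * Complex.I * q.1 ^ 2 * DW c q - NU c q * (1 + fz q * fbw q)) * DD c q -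
            2 * AA c q * DW c q) / DD c q ^ 3)
        (((6 * Complex.I * q.1 ^ 2 * DT c q -
            NU c q * (6 * Complex.I * FB c q - 6 * Complex.I * conj q.1 * fz q)) * DD c q -
            2 * AA c q * DT c q) / DD c q ^ 3)) q :=
  wd_congr (hw_div (hwAA c q) (hw_sq (hwDD c q)) (pow_ne_zero 2 hq))
    (by field_simp) (by field_simp) (by field_simp)

lemma hwU2 (hq : DD c q ≠ 0) :
    HasFDerivAt (fun p => BB c p / DD c p ^ 2)
      (wd (((-6 * Complex.I * q.1 ^ 2 * DW c q - NU c q * (1 + fz q * fbw q)) * DD c q -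
            2 * BB c q * DZ c q) / DD c q ^ 3)
        ((-(NU c q) * (6 * conj q.1 * FF c q) * DD c q - 2 * BB c q * DW c q) / DD c q ^ 3)
        ((-(NU c q) * (6 * Complex.I * q.1 * fbw q - 6 * Complex.I * FF c q) * DD c q -
            2 * BB c q * DT c q) / DD c q ^ 3)) q :=
  wd_congr (hw_div (hwBB c q) (hw_sq (hwDD c q)) (pow_ne_zero 2 hq))
    (by field_simp) (by field_simp) (by field_simp)

lemma hwEq (hq : DD c q ≠ 0) :
    HasFDerivAt (fun p => EE c p / DD c p ^ 2)
      (wd ((-Complex.I * (6 * FB c q * DD c q + 6 * q.1 * FB c q * DZ c q -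
            2 * DZ c q * (6 * q.1 * FB c q)) * DD c q - 2 * EE c q * DZ c q) / DD c q ^ 3)
        ((-Complex.I * (6 * q.1 * (fbw q * DD c q + FB c q * DW c q) -
            2 * DZ c q * (1 + fz q * fbw q)) * DD c q - 2 * EE c q * DW c q) / DD c q ^ 3)
        ((-Complex.I * (6 * q.1 * (-6 * Complex.I * conj q.1 * DD c q + FB c q * DT c q) -
            2 * DZ c q * (6 * Complex.I * FB c q - 6 * Complex.I * conj q.1 * fz q)) * DD c q -
            2 * EE c q * DT c q) / DD c q ^ 3)) q :=
  wd_congr (hw_div (hwEE c q) (hw_sq (hwDD c q)) (pow_ne_zero 2 hq))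
    (by field_simp) (by field_simp) (by field_simp)

/-! smoothness -/

variable (c)

lemma cd_z : ContDiff ℝ (⊤ : WithTop ℕ∞) (fun q : ℂ × ℝ => q.1) := contDiff_fst

lemma cd_w : ContDiff ℝ (⊤ : WithTop ℕ∞) (fun q : ℂ × ℝ => conj q.1) :=
  Complex.conjCLE.toContinuousLinearMap.contDiff.comp contDiff_fst

lemma cd_t : ContDiff ℝ (⊤ : WithTop ℕ∞) (fun q : ℂ × ℝ => (q.2 : ℂ)) :=
  Complex.ofRealCLM.contDiff.comp contDiff_snd

lemma cdfz : ContDiff ℝ (⊤ : WithTop ℕ∞) fz := by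
  unfold fz; exact (contDiff_const.mul (cd_z.pow 2)).add (contDiff_const.mul cd_t)

lemma cdFF : ContDiff ℝ (⊤ : WithTop ℕ∞) (FF c) := by
  unfold FF
  exact ((cd_z.pow 3).add ((contDiff_const.mul cd_t).mul cd_z)).add contDiff_const

lemma cdFB : ContDiff ℝ (⊤ : WithTop ℕ∞) (FB c) := by
  unfold FB
  exact ((cd_w.pow 3).sub ((contDiff_const.mul cd_t).mul cd_w)).add contDiff_const

lemma cdDD : ContDiff ℝ (⊤ : WithTop ℕ∞) (DD c) := by
  unfold DD; exact (cd_z.mul cd_w).add ((cdFF c).mul (cdFB c))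

lemma cdDZ : ContDiff ℝ (⊤ : WithTop ℕ∞) (DZ c) := by
  unfold DZ; exact cd_w.add (cdfz.mul (cdFB c))

lemma cdNU : ContDiff ℝ (⊤ : WithTop ℕ∞) (NU c) := by
  unfold NU
  exact contDiff_const.mul ((contDiff_const.mul (cd_z.pow 3)).sub contDiff_const)

lemma cdEE : ContDiff ℝ (⊤ : WithTop ℕ∞) (EE c) := by
  unfold EE
  exact contDiff_const.mul ((((contDiff_const.mul cd_z).mul (cdFB c)).mul (cdDD c)).sub
    ((cdDZ c).pow 2))

end DSII
set_option maxHeartbeats 4000000 in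
open DSII in
/-- The solution from f = z³ + 6itz + c (case n = 2). -/
theorem solution_n2
    (c : ℂ)
    (f D U a V : ℂ × ℝ → ℂ)
    (hf : ∀ p, f p = p.1 ^ 3 + 6 * Complex.I * (p.2 : ℂ) * p.1 + c)
    (hD : ∀ p, D p = (Complex.normSq p.1 : ℂ) + (Complex.normSq (f p) : ℂ))
    (hUdef : ∀ p, U p = Complex.I * (2 * p.1 ^ 3 - c) / D p)
    (hadef : ∀ p, a p =
      -Complex.I * (conj p.1 + (3 * p.1 ^ 2 + 6 * Complex.I * (p.2 : ℂ)) * conj (f p)) / D p)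
    (hVdef : ∀ p, V p = 2 * Complex.I * dz a p) :
    (∀ p : ℂ × ℝ, D p ≠ 0 → DSIIAt U V p) ∧
    (c ≠ 0 → (∀ p : ℂ × ℝ, 0 < Complex.normSq p.1 + Complex.normSq (f p)) ∧
      ContDiff ℝ (⊤ : ℕ∞) U ∧ ContDiff ℝ (⊤ : ℕ∞) V) := by
  obtain rfl : f = FF c := funext fun p => by rw [hf]; rfl
  obtain rfl : D = DD c := funext fun p => by rw [hD, DD_real, Complex.ofReal_add]
  obtain rfl : U = fun p => NU c p / DD c p := funext fun p => by rw [hUdef]; rfl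
  obtain rfl : a = fun p => -Complex.I * DZ c p / DD c p :=
    funext fun p => by rw [hadef, conj_FF]; rfl
  obtain rfl : V = fun p => 2 * Complex.I *
      dz (fun p => -Complex.I * DZ c p / DD c p) p := funext fun p => hVdef p
  constructor
  · intro p hp
    have hev : ∀ᶠ q in nhds p, DD c q ≠ 0 :=
      ((cdDD c).continuous.continuousAt).eventually_ne hp
    have hUz : dz (fun p => NU c p / DD c p) =ᶠ[nhds p]
        fun q => AA c q / DD c q ^ 2 :=
      hev.mono fun q hq => dz_eq (hwU hq)
    have hUzb : dzb (fun p => NU c p / DD c p) =ᶠ[nhds p]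
        fun q => BB c q / DD c q ^ 2 :=
      hev.mono fun q hq => dzb_eq (hwU hq)
    have hVev : (fun p => 2 * Complex.I * dz (fun p => -Complex.I * DZ c p / DD c p) p)
        =ᶠ[nhds p] fun q => 2 * Complex.I * (EE c q / DD c q ^ 2) :=
      hev.mono fun q hq => by
        show 2 * Complex.I * dz (fun p => -Complex.I * DZ c p / DD c p) q
          = 2 * Complex.I * (EE c q / DD c q ^ 2)
        rw [dz_eq (hwa hq)]
    refine ⟨?_, ?_⟩
    · -- the evolution equation
      show dt (fun p => NU c p / DD c p) p = Complex.I *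
        (dz (dz (fun p => NU c p / DD c p)) p +
         dzb (dzb (fun p => NU c p / DD c p)) p +
         ((2 * Complex.I * dz (fun p => -Complex.I * DZ c p / DD c p) p +
           conj (2 * Complex.I * dz (fun p => -Complex.I * DZ c p / DD c p) p)) *
          (NU c p / DD c p)))
      have e5 : conj (2 * Complex.I * (EE c p / DD c p ^ 2)) =
          -(2 * Complex.I * (GB c p / DD c p ^ 2)) := by
        rw [map_mul, map_mul, map_div₀, map_pow, conj_EE, conj_DD, Complex.conj_I, map_ofNat]
        ring
      have key : CC c p * DD c p =
          Complex.I * (((12 * Complex.I * p.1 * DD c p - 6 * p.1 * NU c p * FB c p) * DD c p -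
              2 * AA c p * DZ c p) +
            (-(NU c p) * (6 * conj p.1 * FF c p) * DD c p - 2 * BB c p * DW c p) +
            (2 * Complex.I * EE c p - 2 * Complex.I * GB c p) * NU c p) := by
        simp only [CC, AA, BB, EE, GB, NU, DD, DZ, DW, DT, FF, FB, fz, fbw]
        linear_combination ((72)*((p.2:ℂ) ^ 2)*(c)*((conj c) ^ 2)*(Complex.I ^ 4) + (72)*((p.2:ℂ) ^ 2)*(c ^ 3)*(Complex.I ^ 4) + (-12)*((conj p.1))*(c ^ 3)*((conj c))*(Complex.I ^ 2) + (24)*((conj p.1))*((p.2:ℂ))*(c)*((conj c))*(Complex.I ^ 3) + (-864)*((conj p.1))*((p.2:ℂ) ^ 3)*(c)*((conj c))*(Complex.I ^ 5) + (2)*((conj p.1) ^ 2)*(c)*(Complex.I ^ 2) + (-144)*((conj p.1) ^ 2)*((p.2:ℂ) ^ 2)*(c)*(Complex.I ^ 4) + (2592)*((conj p.1) ^ 2)*((p.2:ℂ) ^ 4)*(c)*(Complex.I ^ 6) + (144)*((conj p.1) ^ 3)*((p.2:ℂ) ^ 2)*(c)*((conj c))*(Complex.I ^ 4) + (6)*((conj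 p.1) ^ 4)*(c ^ 3)*(Complex.I ^ 2) + (24)*((conj p.1) ^ 4)*((p.2:ℂ))*(c)*(Complex.I ^ 3) + (-864)*((conj p.1) ^ 4)*((p.2:ℂ) ^ 3)*(c)*(Complex.I ^ 5) + (72)*((conj p.1) ^ 6)*((p.2:ℂ) ^ 2)*(c)*(Complex.I ^ 4) + (-12)*(p.1)*(c ^ 2)*((conj c) ^ 2)*(Complex.I ^ 2) + (-24)*(p.1)*((p.2:ℂ))*(c ^ 2)*(Complex.I ^ 3) + (864)*(p.1)*((p.2:ℂ) ^ 3)*(c ^ 2)*(Complex.I ^ 5) + (-432)*(p.1)*((conj p.1) ^ 2)*((p.2:ℂ) ^ 2)*(c ^ 2)*(Complex.I ^ 4) + (-24)*(p.1)*((conj p.1) ^ 3)*(c ^ 2)*((conj c))*(Complex.I ^ 2) + (216)*(p.1)*((conj p.1) ^ 4)*((p.2:ℂ))*(c ^ 2)*(Complex.I ^ 3) + (-12)*(p.1)*((conj p.1) ^ 6)*(c ^ 2)*(Complex.I ^ 2) + (2)*(p.1 ^ 2)*(c)*(Complex.I ^ 2) + (-144)*(p.1 ^ 2)*((p.2:ℂ)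 ^ 2)*(c)*(Complex.I ^ 4) + (2592)*(p.1 ^ 2)*((p.2:ℂ) ^ 4)*(c)*(Complex.I ^ 6) + (-432)*(p.1 ^ 2)*((conj p.1))*((p.2:ℂ) ^ 2)*(c)*((conj c))*(Complex.I ^ 4) + (216)*(p.1 ^ 2)*((conj p.1) ^ 4)*((p.2:ℂ) ^ 2)*(c)*(Complex.I ^ 4) + (-144)*(p.1 ^ 3)*((p.2:ℂ) ^ 2)*((conj c) ^ 2)*(Complex.I ^ 4) + (-48)*(p.1 ^ 3)*((conj p.1))*((p.2:ℂ))*((conj c))*(Complex.I ^ 3) + (1728)*(p.1 ^ 3)*((conj p.1))*((p.2:ℂ) ^ 3)*((conj c))*(Complex.I ^ 5) + (-4)*(p.1 ^ 3)*((conj p.1) ^ 2)*(Complex.I ^ 2) + (288)*(p.1 ^ 3)*((conj p.1) ^ 2)*((p.2:ℂ) ^ 2)*(Complex.I ^ 4) + (-5184)*(p.1 ^ 3)*((conj p.1) ^ 2)*((p.2:ℂ) ^ 4)*(Complex.I ^ 6) + (-288)*(p.1 ^ 3)*((conj p.1) ^ 3)*((p.2:ℂ) ^ 2)*((conj c))*(Complex.I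 ^ 4) + (-48)*(p.1 ^ 3)*((conj p.1) ^ 4)*((p.2:ℂ))*(Complex.I ^ 3) + (1728)*(p.1 ^ 3)*((conj p.1) ^ 4)*((p.2:ℂ) ^ 3)*(Complex.I ^ 5) + (-144)*(p.1 ^ 3)*((conj p.1) ^ 6)*((p.2:ℂ) ^ 2)*(Complex.I ^ 4) + (30)*(p.1 ^ 4)*(c)*((conj c) ^ 2)*(Complex.I ^ 2) + (24)*(p.1 ^ 4)*((p.2:ℂ))*(c)*(Complex.I ^ 3) + (-864)*(p.1 ^ 4)*((p.2:ℂ) ^ 3)*(c)*(Complex.I ^ 5) + (-216)*(p.1 ^ 4)*((conj p.1))*((p.2:ℂ))*(c)*((conj c))*(Complex.I ^ 3) + (1080)*(p.1 ^ 4)*((conj p.1) ^ 2)*((p.2:ℂ) ^ 2)*(c)*(Complex.I ^ 4) + (60)*(p.1 ^ 4)*((conj p.1) ^ 3)*(c)*((conj c))*(Complex.I ^ 2) + (-432)*(p.1 ^ 4)*((conj p.1) ^ 4)*((p.2:ℂ))*(c)*(Complex.I ^ 3) + (30)*(p.1 ^ 4)*((conj p.1) ^ 6)*(c)*(Complex.I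 ^ 2) + (-4)*(p.1 ^ 5)*(Complex.I ^ 2) + (288)*(p.1 ^ 5)*((p.2:ℂ) ^ 2)*(Complex.I ^ 4) + (-5184)*(p.1 ^ 5)*((p.2:ℂ) ^ 4)*(Complex.I ^ 6) + (864)*(p.1 ^ 5)*((conj p.1))*((p.2:ℂ) ^ 2)*((conj c))*(Complex.I ^ 4) + (-432)*(p.1 ^ 5)*((conj p.1) ^ 4)*((p.2:ℂ) ^ 2)*(Complex.I ^ 4) + (-216)*(p.1 ^ 6)*((p.2:ℂ) ^ 2)*(c)*(Complex.I ^ 4) + (36)*(p.1 ^ 6)*((conj p.1))*(c)*((conj c))*(Complex.I ^ 2) + (-18)*(p.1 ^ 6)*((conj p.1) ^ 4)*(c)*(Complex.I ^ 2) + (-12)*(p.1 ^ 7)*((conj c) ^ 2)*(Complex.I ^ 2) + (48)*(p.1 ^ 7)*((p.2:ℂ))*(Complex.I ^ 3) + (-1728)*(p.1 ^ 7)*((p.2:ℂ) ^ 3)*(Complex.I ^ 5) + (432)*(p.1 ^ 7)*((conj p.1))*((p.2:ℂ))*((conj c))*(Complex.I ^ 3) + (-432)*(p.1 ^ 7)*((conj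 p.1) ^ 2)*((p.2:ℂ) ^ 2)*(Complex.I ^ 4) + (-24)*(p.1 ^ 7)*((conj p.1) ^ 3)*((conj c))*(Complex.I ^ 2) + (-12)*(p.1 ^ 7)*((conj p.1) ^ 6)*(Complex.I ^ 2) + (-144)*(p.1 ^ 9)*((p.2:ℂ) ^ 2)*(Complex.I ^ 4) + (24)*(p.1 ^ 9)*((conj p.1))*((conj c))*(Complex.I ^ 2) + (-12)*(p.1 ^ 9)*((conj p.1) ^ 4)*(Complex.I ^ 2)) * Complex.I_sq
      rw [dt_eq (hwU hp), dz_congr hUz, dzb_congr hUzb, dz_eq (hwa hp),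
          dz_eq (hwU1 hp), dzb_eq (hwU2 hp), e5]
      have combine : Complex.I *
          (((12 * Complex.I * p.1 * DD c p - 6 * p.1 * NU c p * FB c p) * DD c p -
              2 * AA c p * DZ c p) / DD c p ^ 3 +
            (-(NU c p) * (6 * conj p.1 * FF c p) * DD c p - 2 * BB c p * DW c p) / DD c p ^ 3 +
            ((2 * Complex.I * (EE c p / DD c p ^ 2) +
              -(2 * Complex.I * (GB c p / DD c p ^ 2))) * (NU c p / DD c p)))
          = (Complex.I * (((12 * Complex.I * p.1 * DD c p - 6 * p.1 * NU c p * FB c p) * DD c p -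
              2 * AA c p * DZ c p) +
            (-(NU c p) * (6 * conj p.1 * FF c p) * DD c p - 2 * BB c p * DW c p) +
            (2 * Complex.I * EE c p - 2 * Complex.I * GB c p) * NU c p)) / DD c p ^ 3 := by
        field_simp
        ring
      rw [combine, ← key, div_eq_div_iff (pow_ne_zero 2 hp) (pow_ne_zero 3 hp)]
      ring
    · -- the auxiliary equation
      show dzb (fun p => 2 * Complex.I * dz (fun p => -Complex.I * DZ c p / DD c p) p) p
        = 2 * dz (fun q => NU c q / DD c q * conj (NU c q / DD c q)) p
      rw [dzb_congr hVev]
      have hL : dzb (fun q => 2 * Complex.I * (EE c q / DD c q ^ 2)) p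
          = 2 * Complex.I * ((-Complex.I * (6 * p.1 * (fbw p * DD c p + FB c p * DW c p) -
              2 * DZ c p * (1 + fz p * fbw p)) * DD c p - 2 * EE c p * DW c p) / DD c p ^ 3) :=
        dzb_eq (hw_smul (2 * Complex.I) (hwEq hp))
      have hR : dz (fun q => NU c q / DD c q * conj (NU c q / DD c q)) p
          = (NU c p / DD c p) * conj (BB c p / DD c p ^ 2)
            + conj (NU c p / DD c p) * (AA c p / DD c p ^ 2) :=
        dz_eq (hw_mul (hwU hp) (hw_conj (hwU hp)))
      have c1 : conj (BB c p / DD c p ^ 2) = -(NB c p) * DZ c p / DD c p ^ 2 := by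
        rw [map_div₀, map_pow, conj_BB, conj_DD]
      have c2 : conj (NU c p / DD c p) = NB c p / DD c p := by
        rw [map_div₀, conj_NU, conj_DD]
      rw [hL, hR, c1, c2]
      have combine2 : (NU c p / DD c p) * (-(NB c p) * DZ c p / DD c p ^ 2)
          + NB c p / DD c p * (AA c p / DD c p ^ 2)
          = (NU c p * (-(NB c p) * DZ c p) + NB c p * AA c p) / DD c p ^ 3 := by
        field_simp
      rw [combine2]
      have hnum : 2 * Complex.I * ((-Complex.I * (6 * p.1 * (fbw p * DD c p + FB c p * DW c p) -
          2 * DZ c p * (1 + fz p * fbw p)) * DD c p - 2 * EE c p * DW c p))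
          = 2 * (NU c p * (-(NB c p) * DZ c p) + NB c p * AA c p) := by
        simp only [AA, EE, NU, NB, DD, DZ, DW, DT, FF, FB, fz, fbw]
        ring
      rw [mul_div_assoc', mul_div_assoc', hnum]
  · intro hc
    have hpos : ∀ p : ℂ × ℝ, 0 < Complex.normSq p.1 + Complex.normSq (FF c p) := by
      intro p
      rcases eq_or_ne p.1 0 with h | h
      · have h2 : FF c p = c := by simp [FF, h]
        rw [h2, h]
        simpa using Complex.normSq_pos.mpr hc
      · exact add_pos_of_pos_of_nonneg (Complex.normSq_pos.mpr h) (Complex.normSq_nonneg _)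
    have hne : ∀ q : ℂ × ℝ, DD c q ≠ 0 := fun q => by
      rw [DD_real]
      exact Complex.ofReal_ne_zero.mpr (ne_of_gt (hpos q))
    have hU : ContDiff ℝ (⊤ : ℕ∞) (fun p => NU c p / DD c p) := by
      simp only [div_eq_mul_inv]; exact ((cdNU c).mul ((cdDD c).inv hne)).of_le le_top
    refine ⟨hpos, hU, ?_⟩
    have hfun : (fun p => 2 * Complex.I * dz (fun p => -Complex.I * DZ c p / DD c p) p)
        = fun q => 2 * Complex.I * (EE c q / DD c q ^ 2) := by
      funext q; rw [dz_eq (hwa (hne q))]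
    rw [hfun]
    have h2 : ContDiff ℝ (⊤ : ℕ∞) (fun q => EE c q / DD c q ^ 2) := by
      simp only [div_eq_mul_inv]
      exact ((cdEE c).mul (((cdDD c).pow 2).inv (fun q => pow_ne_zero 2 (hne q)))).of_le le_top
    exact contDiff_const.mul h2
end
end

section
/- Let c > 0 be real, set U(z,t) = i(3z⁴ + 12itz² + 12t² − c)/(|z|² + |z⁴ + 12itz² − 12t² + c|²), and let t₀ = √(c/12) or t₀ = −√(c/12). Then at time t₀ one has, for each fixed φ ∈ ℝ, that the limit of U(r·e^{iφ}, t₀) as r → 0⁺ equals −12·t₀·e^{2iφ}; in particular U(·, t₀) has no continuous extension to z = 0. -/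
open Complex Filter Topology

/-- For c > 0 real and t₀ = ±√(c/12), the quartic example develops the angular
singularity U ∼ −12t₀e^{2iφ} at the origin, hence no continuous extension
to z = 0. -/
theorem singularity_n3 (c : ℝ) (hc : 0 < c) (t₀ : ℝ)
    (ht₀ : t₀ = Real.sqrt (c / 12) ∨ t₀ = -Real.sqrt (c / 12))
    (U : ℂ × ℝ → ℂ)
    (hU : ∀ p, U p = Complex.I * (3 * p.1 ^ 4 + 12 * Complex.I * (p.2 : ℂ) * p.1 ^ 2
        + 12 * (p.2 : ℂ) ^ 2 - (c : ℂ)) /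
      ((Complex.normSq p.1 +
          Complex.normSq (p.1 ^ 4 + 12 * Complex.I * (p.2 : ℂ) * p.1 ^ 2
            - 12 * (p.2 : ℂ) ^ 2 + (c : ℂ)) : ℝ) : ℂ)) :
    (∀ φ : ℝ,
      Tendsto (fun r : ℝ => U ((r : ℂ) * Complex.exp (Complex.I * (φ : ℂ)), t₀))
        (𝓝[>] 0) (𝓝 (-12 * (t₀ : ℂ) * Complex.exp (2 * Complex.I * (φ : ℂ))))) ∧
    ¬ ∃ w : ℂ, Tendsto (fun z : ℂ => U (z, t₀)) (𝓝[≠] 0) (𝓝 w) := by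
  -- basic facts about t₀
  have ht2 : t₀ ^ 2 = c / 12 := by
    rcases ht₀ with h | h <;> rw [h] <;>
      simpa using Real.sq_sqrt (by positivity : (0:ℝ) ≤ c / 12)
  have ht0ne : t₀ ≠ 0 := by
    intro h
    rw [h] at ht2
    simp at ht2
    nlinarith
  have hcC : (c : ℂ) = 12 * (t₀ : ℂ) ^ 2 := by
    have : c = 12 * t₀ ^ 2 := by rw [ht2]; ring
    rw [this]; push_cast; ring
  -- the key ray limit
  have key : ∀ φ : ℝ,
      Tendsto (fun r : ℝ => U ((r : ℂ) * Complex.exp (Complex.I * (φ : ℂ)), t₀))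
        (𝓝[>] 0) (𝓝 (-12 * (t₀ : ℂ) * Complex.exp (2 * Complex.I * (φ : ℂ)))) := by
    intro φ
    set e : ℂ := Complex.exp (Complex.I * (φ : ℂ)) with he
    have hne : Complex.normSq e = 1 := by
      rw [he, Complex.normSq_eq_norm_sq, mul_comm, Complex.norm_exp_ofReal_mul_I]
      norm_num
    -- auxiliary function, continuous at 0
    set g : ℝ → ℂ := fun r =>
      e ^ 2 * (3 * Complex.I * (r : ℂ) ^ 2 * e ^ 2 - 12 * (t₀ : ℂ)) /
        (1 + (r : ℂ) ^ 2 *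
          ((Complex.normSq ((r : ℂ) ^ 2 * e ^ 2 + 12 * Complex.I * (t₀ : ℂ)) : ℝ) : ℂ)) with hg
    have heq : ∀ r : ℝ, 0 < r →
        U ((r : ℂ) * e, t₀) = g r := by
      intro r hr
      have hrne : (r : ℂ) ≠ 0 := by exact_mod_cast hr.ne'
      rw [hU]
      simp only
      set z : ℂ := (r : ℂ) * e with hz
      have hz2 : z ^ 2 = (r : ℂ) ^ 2 * e ^ 2 := by rw [hz]; ring
      have hnum : Complex.I * (3 * z ^ 4 + 12 * Complex.I * (t₀ : ℂ) * z ^ 2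
          + 12 * (t₀ : ℂ) ^ 2 - (c : ℂ))
          = (r : ℂ) ^ 2 * (e ^ 2 * (3 * Complex.I * (r : ℂ) ^ 2 * e ^ 2 - 12 * (t₀ : ℂ))) := by
        rw [hcC, hz]; ring_nf
        simp [Complex.I_sq]
        ring
      have hfac : z ^ 4 + 12 * Complex.I * (t₀ : ℂ) * z ^ 2
          - 12 * (t₀ : ℂ) ^ 2 + (c : ℂ)
          = z ^ 2 * (z ^ 2 + 12 * Complex.I * (t₀ : ℂ)) := by
        rw [hcC]; ring
      have hnsz : Complex.normSq z = r ^ 2 := by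
        rw [hz, map_mul, hne, Complex.normSq_ofReal]; ring
      have hA : Complex.normSq (z ^ 2 * (z ^ 2 + 12 * Complex.I * (t₀ : ℂ)))
          = r ^ 4 * Complex.normSq ((r : ℂ) ^ 2 * e ^ 2 + 12 * Complex.I * (t₀ : ℂ)) := by
        rw [map_mul, hz2, map_mul, map_pow, map_pow, Complex.normSq_ofReal, hne]; ring
      have hden : ((Complex.normSq z +
          Complex.normSq (z ^ 4 + 12 * Complex.I * (t₀ : ℂ) * z ^ 2
            - 12 * (t₀ : ℂ) ^ 2 + (c : ℂ)) : ℝ) : ℂ)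
          = (r : ℂ) ^ 2 * (1 + (r : ℂ) ^ 2 *
            ((Complex.normSq ((r : ℂ) ^ 2 * e ^ 2 + 12 * Complex.I * (t₀ : ℂ)) : ℝ) : ℂ)) := by
        rw [hfac, hnsz, hA]
        push_cast
        ring
      rw [hnum, hden, hg]
      simp only
      rw [mul_div_mul_left _ _ (pow_ne_zero 2 hrne)]
    have hgcont : Tendsto g (𝓝 0) (𝓝 (-12 * (t₀ : ℂ) * Complex.exp (2 * Complex.I * (φ : ℂ)))) := by
      have hco : Continuous (fun r : ℝ => ((r : ℂ))) := Complex.continuous_ofReal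
      have h1 : Tendsto (fun r : ℝ =>
          e ^ 2 * (3 * Complex.I * (r : ℂ) ^ 2 * e ^ 2 - 12 * (t₀ : ℂ))) (𝓝 0)
          (𝓝 (e ^ 2 * (3 * Complex.I * (0 : ℂ) ^ 2 * e ^ 2 - 12 * (t₀ : ℂ)))) := by
        have hcont : Continuous (fun r : ℝ =>
            e ^ 2 * (3 * Complex.I * (r : ℂ) ^ 2 * e ^ 2 - 12 * (t₀ : ℂ))) :=
          continuous_const.mul (((continuous_const.mul (hco.pow 2)).mul
            continuous_const).sub continuous_const)
        simpa using hcont.tendsto 0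
      have h2 : Tendsto (fun r : ℝ =>
          1 + (r : ℂ) ^ 2 *
            ((Complex.normSq ((r : ℂ) ^ 2 * e ^ 2 + 12 * Complex.I * (t₀ : ℂ)) : ℝ) : ℂ)) (𝓝 0)
          (𝓝 1) := by
        have hcont : Continuous (fun r : ℝ =>
            1 + (r : ℂ) ^ 2 *
              ((Complex.normSq ((r : ℂ) ^ 2 * e ^ 2 + 12 * Complex.I * (t₀ : ℂ)) : ℝ) : ℂ)) :=
          continuous_const.add ((hco.pow 2).mul (Complex.continuous_ofReal.comp
            (Complex.continuous_normSq.comp (((hco.pow 2).mul continuous_const).add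
              continuous_const))))
        have := hcont.tendsto 0
        simpa using this
      have hdiv := h1.div h2 one_ne_zero
      have hee : Complex.exp (2 * Complex.I * (φ : ℂ)) = e ^ 2 := by
        rw [he, sq, ← Complex.exp_add]; ring_nf
      have hval : e ^ 2 * (3 * Complex.I * (0 : ℂ) ^ 2 * e ^ 2 - 12 * (t₀ : ℂ)) / 1
          = -12 * (t₀ : ℂ) * Complex.exp (2 * Complex.I * (φ : ℂ)) := by
        rw [hee]; ring
      rw [hg]
      rw [hval] at hdiv
      exact hdiv
    refine Tendsto.congr' ?_ (hgcont.mono_left nhdsWithin_le_nhds)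
    filter_upwards [self_mem_nhdsWithin] with r hr
    exact (heq r hr).symm
  refine ⟨key, ?_⟩
  rintro ⟨w, hw⟩
  -- limits along two rays give contradictory values
  have ray : ∀ φ : ℝ, w = -12 * (t₀ : ℂ) * Complex.exp (2 * Complex.I * (φ : ℂ)) := by
    intro φ
    have hmap : Tendsto (fun r : ℝ => (r : ℂ) * Complex.exp (Complex.I * (φ : ℂ)))
        (𝓝[>] 0) (𝓝[≠] 0) := by
      apply tendsto_nhdsWithin_of_tendsto_nhds_of_eventually_within
      · have : Continuous (fun r : ℝ => (r : ℂ) * Complex.exp (Complex.I * (φ : ℂ))) :=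
          Complex.continuous_ofReal.mul continuous_const
        have h := this.tendsto 0
        simp only [Complex.ofReal_zero, zero_mul] at h
        exact h.mono_left nhdsWithin_le_nhds
      · filter_upwards [self_mem_nhdsWithin] with r hr
        have hrne : (r : ℂ) ≠ 0 := by exact_mod_cast (ne_of_gt hr)
        exact mul_ne_zero hrne (Complex.exp_ne_zero _)
    have h1 : Tendsto (fun r : ℝ => U ((r : ℂ) * Complex.exp (Complex.I * (φ : ℂ)), t₀))
        (𝓝[>] 0) (𝓝 w) := hw.comp hmap
    exact tendsto_nhds_unique h1 (key φ)
  have h0 := ray 0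
  have hpi := ray (Real.pi / 2)
  have hexp : Complex.exp (2 * Complex.I * ((Real.pi / 2 : ℝ) : ℂ)) = -1 := by
    have harg : 2 * Complex.I * ((Real.pi / 2 : ℝ) : ℂ) = (Real.pi : ℂ) * Complex.I := by
      push_cast; ring
    rw [harg, Complex.exp_pi_mul_I]
  have h1 : Complex.exp (2 * Complex.I * ((0 : ℝ) : ℂ)) = 1 := by
    norm_num
  rw [hexp] at hpi
  rw [h1] at h0
  rw [h0] at hpi
  have ht : (t₀ : ℂ) = 0 := by linear_combination (-1/24 : ℂ) * hpi
  exact ht0ne (by exact_mod_cast ht)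
end
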